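/- arXiv:1911.10456 — 6 statements merged into one kernel-verified Lean document; each statement's English description precedes it below -/
import Mathlib

section
/- Let q = p^m be a power of a prime p, let α ∈ F_{q²} satisfy α^{q+1} = −1, and let L be an n×n unitary matrix over F_{q²}. Then the code generated by the n×2n block matrix G = (Lᵀ | αL) is a Hermitian self-dual code of length 2n and F_{q²}-dimension n. -/
open Matrix BigOperators Finset

/-- The Hermitian inner product `x * y = ∑ i, x i * (y i)^q` over `F_{q²}`. -/
def hermInner (q : ℕ) {F : Type} [CommRing F] {ι : Type} [Fintype ι]
    (x y : ι → F) : F :=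
  ∑ i, x i * y i ^ q

/-- The Hermitian dual of a set of vectors. -/
def hermDual (q : ℕ) {F : Type} [CommRing F] {ι : Type} [Fintype ι]
    (C : Set (ι → F)) : Set (ι → F) :=
  {y | ∀ x ∈ C, hermInner q x y = 0}

/-- The code generated by a matrix: the span of its rows. -/
def rowSpan {F : Type} [Field F] {k : ℕ} {ι : Type} (G : Matrix (Fin k) ι F) :
    Submodule F (ι → F) :=
  Submodule.span F (Set.range fun i => G i)

/-- if `α^{q+1} = -1` and `L` is an `n×n` unitary matrix over `F_{q²}`,
then the code generated by `G = (Lᵀ | αL)` is a Hermitian self-dual code of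
length `2n` and dimension `n`. -/
theorem stmt3 (p m q n : ℕ) (hp : p.Prime) (hm : 0 < m) (hq : q = p ^ m)
    (F : Type) [Field F] [Fintype F] (hF : Fintype.card F = q ^ 2)
    (α : F) (hα : α ^ (q + 1) = -1)
    (L : Matrix (Fin n) (Fin n) F) (hL : L * (L.map (· ^ q))ᵀ = 1)
    (G : Matrix (Fin n) (Fin n ⊕ Fin n) F)
    (hG : ∀ i j, G i (Sum.inl j) = L j i ∧ G i (Sum.inr j) = α * L i j) :
    (rowSpan G : Set (Fin n ⊕ Fin n → F)) = hermDual q (rowSpan G) ∧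
    Module.finrank F (rowSpan G) = n := by
  have hq0 : q ≠ 0 := by
    have : 0 < p ^ m := pow_pos hp.pos m
    omega
  -- x ^ (q^2) = x
  have hpp : ∀ x : F, (x ^ q) ^ q = x := by
    intro x
    rw [← pow_mul, ← sq, ← hF]
    exact FiniteField.pow_card x
  -- the characteristic of F is p
  haveI hfp : Fact p.Prime := ⟨hp⟩
  have hcard : Fintype.card F = p ^ (2 * m) := by
    rw [hF, hq, ← pow_mul, mul_comm m 2]
  haveI hcharp : CharP F p := by
    obtain ⟨r, hr⟩ := CharP.exists F
    obtain ⟨k, hrp, hk⟩ := @FiniteField.card F _ _ r hr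
    have hdvd : p ∣ r ^ (k : ℕ) := by
      rw [← hk, hcard]
      exact dvd_pow_self p (by omega)
    have : p = r := by
      have := hp.dvd_of_dvd_pow hdvd
      exact ((Nat.prime_dvd_prime_iff_eq hp hrp).mp this)
    rwa [this]
  have hadd : ∀ a b : F, (a + b) ^ q = a ^ q + b ^ q := by
    intro a b; rw [hq]; exact add_pow_char_pow a b p m
  -- the conjugation ring hom
  set φ : F →+* F :=
    { toFun := fun x => x ^ q
      map_one' := one_pow q
      map_mul' := fun a b => mul_pow a b q
      map_zero' := zero_pow hq0
      map_add' := hadd } with hφdef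
  have hφ : ∀ x : F, φ x = x ^ q := fun _ => rfl
  set Lb : Matrix (Fin n) (Fin n) F := L.map φ with hLbdef
  have hLb : ∀ i j, Lb i j = L i j ^ q := fun _ _ => rfl
  have hLbb : Lb.map φ = L := by
    ext i j; simp [hLb, hφ, Matrix.map_apply, hpp]
  have hL' : L * Lbᵀ = 1 := hL
  have h1 : Lbᵀ * L = 1 := mul_eq_one_comm.mp hL'
  have h2 : Lᵀ * Lb = 1 := by
    have := congrArg Matrix.transpose h1
    rwa [Matrix.transpose_mul, Matrix.transpose_transpose, Matrix.transpose_one] at this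
  -- scalar facts about α
  have hαα : α ^ q * α = -1 := by rw [← pow_succ]; exact hα
  -- rows of G are pairwise hermitian-orthogonal
  have horth : ∀ i k, hermInner q (G i) (G k) = 0 := by
    intro i k
    have hsum : hermInner q (G i) (G k) =
        (∑ j, L j i * L j k ^ q) + ∑ j, (α * L i j) * (α * L k j) ^ q := by
      rw [hermInner, Fintype.sum_sum_type]
      congr 1
      · exact Finset.sum_congr rfl fun j _ => by rw [(hG i j).1, (hG k j).1]
      · exact Finset.sum_congr rfl fun j _ => by rw [(hG i j).2, (hG k j).2]
    have e1 : (∑ j, L j i * L j k ^ q) = (Lᵀ * Lb) i k := by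
      rw [Matrix.mul_apply]
      exact Finset.sum_congr rfl fun j _ => by rw [Matrix.transpose_apply, hLb]
    have e2 : (∑ j, (α * L i j) * (α * L k j) ^ q)
        = (α ^ q * α) * (L * Lbᵀ) i k := by
      rw [Matrix.mul_apply, Finset.mul_sum]
      refine Finset.sum_congr rfl fun j _ => ?_
      rw [mul_pow, Matrix.transpose_apply, hLb]
      ring
    rw [hsum, e1, e2, h2, hL', hαα]
    simp
  -- row span as the range of vecMul
  have hspan : rowSpan G = LinearMap.range G.vecMulLinear := by
    rw [_root_.range_vecMulLinear]; rfl
  have hmem : ∀ z, z ∈ rowSpan G ↔ ∃ c, c ᵥ* G = z := by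
    intro z; rw [hspan]; exact LinearMap.mem_range
  have hmv : ∀ (A : Matrix (Fin n) (Fin n) F) (x : Fin n → F) (i : Fin n),
      (A *ᵥ x) i = ∑ j, A i j * x j := fun A x i => rfl
  have hvm : ∀ (c : Fin n → F) (j : Fin n ⊕ Fin n),
      (c ᵥ* G) j = ∑ i, c i * G i j := fun c j => rfl
  constructor
  · apply Set.eq_of_subset_of_subset
    · -- rowSpan ⊆ hermDual : self-orthogonality
      intro y hy x hx
      obtain ⟨c, rfl⟩ := (hmem y).mp hy
      obtain ⟨d, rfl⟩ := (hmem x).mp hx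
      have expand : ∀ j, ((c ᵥ* G) j) ^ q = ∑ k, c k ^ q * G k j ^ q := by
        intro j
        have : (c ᵥ* G) j = ∑ k, c k * G k j := rfl
        rw [this, ← hφ, map_sum]
        exact Finset.sum_congr rfl fun k _ => by rw [hφ, mul_pow]
      have expand2 : ∀ j, (d ᵥ* G) j = ∑ i, d i * G i j := fun j => rfl
      calc hermInner q (d ᵥ* G) (c ᵥ* G)
          = ∑ j, ∑ i, ∑ k, (d i * c k ^ q) * (G i j * G k j ^ q) := by
            rw [hermInner]
            refine Finset.sum_congr rfl fun j _ => ?_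
            rw [expand j, expand2 j, Finset.sum_mul_sum]
            exact Finset.sum_congr rfl fun i _ => Finset.sum_congr rfl fun k _ => by ring
        _ = ∑ i, ∑ j, ∑ k, (d i * c k ^ q) * (G i j * G k j ^ q) := Finset.sum_comm
        _ = ∑ i, ∑ k, (d i * c k ^ q) * ∑ j, G i j * G k j ^ q := by
            refine Finset.sum_congr rfl fun i _ => ?_
            rw [Finset.sum_comm]
            exact Finset.sum_congr rfl fun k _ => (Finset.mul_sum _ _ _).symm
        _ = 0 := by
            refine Finset.sum_eq_zero fun i _ => Finset.sum_eq_zero fun k _ => ?_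
            have := horth i k
            rw [hermInner] at this
            rw [this, mul_zero]
    · -- hermDual ⊆ rowSpan
      intro y hy
      set u : Fin n → F := fun j => y (Sum.inl j) with hu
      set ub : Fin n → F := fun j => (y (Sum.inl j)) ^ q with hub
      set vb : Fin n → F := fun j => (y (Sum.inr j)) ^ q with hvb
      have heq : ∀ i, (Lᵀ *ᵥ ub) i + α * (L *ᵥ vb) i = 0 := by
        intro i
        have hGi : G i ∈ rowSpan G := Submodule.subset_span ⟨i, rfl⟩
        have h0 := hy (G i) hGi
        rw [hermInner, Fintype.sum_sum_type] at h0
        have e1 : (∑ j, G i (Sum.inl j) * (y (Sum.inl j)) ^ q) = (Lᵀ *ᵥ ub) i := by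
          rw [hmv]
          exact Finset.sum_congr rfl fun j _ => by rw [(hG i j).1, Matrix.transpose_apply]
        have e2 : (∑ j, G i (Sum.inr j) * (y (Sum.inr j)) ^ q) = α * (L *ᵥ vb) i := by
          rw [hmv, Finset.mul_sum]
          exact Finset.sum_congr rfl fun j _ => by rw [(hG i j).2]; ring
        rw [e1, e2] at h0
        exact h0
      have h3 : α • (L *ᵥ vb) = -(Lᵀ *ᵥ ub) := by
        funext i
        have := heq i
        simp only [Pi.smul_apply, smul_eq_mul, Pi.neg_apply]
        linear_combination this
      have e1 : L *ᵥ vb = α ^ q • (Lᵀ *ᵥ ub) := by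
        calc L *ᵥ vb = -((α ^ q * α) • (L *ᵥ vb)) := by rw [hαα, neg_one_smul, neg_neg]
          _ = -(α ^ q • (α • (L *ᵥ vb))) := by rw [smul_smul]
          _ = -(α ^ q • (-(Lᵀ *ᵥ ub))) := by rw [h3]
          _ = α ^ q • (Lᵀ *ᵥ ub) := by rw [smul_neg, neg_neg]
      have e2 : vb = α ^ q • ((Lbᵀ * Lᵀ) *ᵥ ub) := by
        calc vb = (Lbᵀ * L) *ᵥ vb := by rw [h1, Matrix.one_mulVec]
          _ = Lbᵀ *ᵥ (L *ᵥ vb) := by rw [Matrix.mulVec_mulVec]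
          _ = Lbᵀ *ᵥ (α ^ q • (Lᵀ *ᵥ ub)) := by rw [e1]
          _ = α ^ q • (Lbᵀ *ᵥ (Lᵀ *ᵥ ub)) := by rw [Matrix.mulVec_smul]
          _ = α ^ q • ((Lbᵀ * Lᵀ) *ᵥ ub) := by rw [Matrix.mulVec_mulVec]
      -- conjugate the equation e2
      have hconjM : ∀ j k, ((Lbᵀ * Lᵀ) j k) ^ q = (Lᵀ * Lbᵀ) j k := by
        intro j k
        rw [← hφ, Matrix.mul_apply, map_sum, Matrix.mul_apply]
        refine Finset.sum_congr rfl fun s _ => ?_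
        rw [_root_.map_mul]
        simp only [Matrix.transpose_apply, hφ, hLb, hpp]
      have hv : ∀ j, y (Sum.inr j) = α * ((Lᵀ * Lbᵀ) *ᵥ u) j := by
        intro j
        have hvbj : vb j = α ^ q * ∑ k, (Lbᵀ * Lᵀ) j k * ub k := by
          rw [e2]
          simp only [Pi.smul_apply, smul_eq_mul]
          rw [hmv]
        have : (vb j) ^ q = y (Sum.inr j) := by rw [hvb]; exact hpp _
        rw [← this, hvbj, ← hφ, _root_.map_mul, map_sum, hφ, hpp]
        congr 1
        rw [hmv]
        refine Finset.sum_congr rfl fun k _ => ?_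
        rw [_root_.map_mul, hφ, hφ, hconjM]
        congr 1
        exact hpp _
      refine (hmem y).mpr ⟨Lbᵀ *ᵥ u, ?_⟩
      funext j
      cases j with
      | inl j =>
        have h5 : ((Lbᵀ *ᵥ u) ᵥ* G) (Sum.inl j) = ∑ i, (Lbᵀ *ᵥ u) i * L j i := by
          rw [hvm]
          exact Finset.sum_congr rfl fun i _ => by rw [(hG i j).1]
        rw [h5]
        have h6 : ∑ i, (Lbᵀ *ᵥ u) i * L j i = ((L * Lbᵀ) *ᵥ u) j := by
          rw [← Matrix.mulVec_mulVec, hmv]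
          exact Finset.sum_congr rfl fun i _ => by ring
        rw [h6, hL', Matrix.one_mulVec]
      | inr j =>
        have h4 : ((Lbᵀ *ᵥ u) ᵥ* G) (Sum.inr j) = α * ((Lᵀ * Lbᵀ) *ᵥ u) j := by
          rw [← Matrix.mulVec_mulVec, hmv, Finset.mul_sum, hvm]
          refine Finset.sum_congr rfl fun i _ => ?_
          rw [(hG i j).2, Matrix.transpose_apply]
          ring
        rw [h4, ← hv j]
  · -- dimension
    have hunit : IsUnit L :=
      @isUnit_of_invertible _ _ L (invertibleOfRightInverse L Lbᵀ hL')
    have hunitT : IsUnit Lᵀ := (Matrix.isUnit_transpose _).mpr hunit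
    have hli : LinearIndependent F (fun i => G i) := by
      have hrows : LinearIndependent F (fun i => Lᵀ i) :=
        Matrix.linearIndependent_rows_iff_isUnit.mpr hunitT
      apply LinearIndependent.of_comp (LinearMap.funLeft F F Sum.inl)
      have : (LinearMap.funLeft F F Sum.inl ∘ fun i => G i) = fun i => Lᵀ i := by
        funext i; funext j
        simp [LinearMap.funLeft, (hG i j).1]
      rw [this]
      exact hrows
    rw [rowSpan, finrank_span_eq_card hli, Fintype.card_fin]
end

section
/- Let q = p^m be a power of a prime p, let n be a positive integer with n ≡ 2 (mod p), let a ∈ F_{q²} satisfy a^{q+1} = −1, and let L be an n×n unitary matrix over F_{q²}. Then the code generated by the n×2n block matrix G = (Jₙ − Iₙ | aL) is a Hermitian self-dual code of length 2n and F_{q²}-dimension n. -/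
/-!
The rows of `G = (Jₙ - Iₙ | aL)` are pairwise Hermitian-orthogonal:
`G Ḡᵀ = (Jₙ - Iₙ)² + a^(q+1) L L̄ᵀ = ((n - 2)Jₙ + Iₙ) - Iₙ = 0` since `n = 2` in `F`, so the code
`C` lies in its dual. The dual of a row space is the preimage of `ker G` under the bijection
`y ↦ y^q`, hence has dimension `2n - rank G`; the invertible block `aL` gives `rank G = n`, so `C`
and its dual have the same number of elements.
-/

open Matrix BigOperators Finset

section HermitianDual

variable {F : Type} [Field F] {ι : Type} {k : ℕ}

theorem rowSpan_eq_range_vecMulLinear (G : Matrix (Fin k) ι F) :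
    rowSpan G = LinearMap.range G.vecMulLinear :=
  (range_vecMulLinear G).symm

variable [Fintype ι]

theorem hermInner_eq_dotProduct (q : ℕ) (x y : ι → F) : hermInner q x y = x ⬝ᵥ y ^ q := rfl

theorem hermDual_rowSpan (q : ℕ) (G : Matrix (Fin k) ι F) :
    hermDual q (rowSpan G : Set (ι → F))
      = (· ^ q) ⁻¹' (LinearMap.ker G.mulVecLin : Set (ι → F)) := by
  ext y
  simp only [hermDual, rowSpan_eq_range_vecMulLinear, Set.mem_ofPred_eq, SetLike.mem_coe,
    LinearMap.mem_range, forall_exists_index, forall_apply_eq_imp_iff, vecMulLinear_apply,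
    hermInner_eq_dotProduct,
    ← dotProduct_mulVec, Set.mem_preimage, LinearMap.mem_ker, mulVecLin_apply]
  simp only [dotProduct_comm _ (G *ᵥ _)]
  exact dotProduct_eq_zero_iff

theorem finrank_rowSpan (G : Matrix (Fin k) ι F) : Module.finrank F (rowSpan G) = G.rank :=
  (rank_eq_finrank_span_row G).symm

theorem ncard_rowSpan (G : Matrix (Fin k) ι F) :
    (rowSpan G : Set (ι → F)).ncard = Nat.card F ^ G.rank := by
  rw [← Nat.card_coe_set_eq, SetLike.coe_sort_coe, Module.natCard_eq_pow_finrank (K := F),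
    finrank_rowSpan]

theorem rank_add_finrank_ker_mulVecLin (G : Matrix (Fin k) ι F) :
    G.rank + Module.finrank F (LinearMap.ker G.mulVecLin) = Fintype.card ι := by
  rw [rank, LinearMap.finrank_range_add_finrank_ker, Module.finrank_fintype_fun_eq_card]

variable {p : ℕ} [ExpChar F p] (m : ℕ)

omit [Fintype ι] in
theorem coe_iterateFrobenius_eq_pow : ⇑(iterateFrobenius F p m) = (· ^ p ^ m) :=
  funext (iterateFrobenius_def p m)

theorem ncard_hermDual_rowSpan [Finite F] (G : Matrix (Fin k) ι F) :
    (hermDual (p ^ m) (rowSpan G : Set (ι → F))).ncard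
      = Nat.card F ^ (Fintype.card ι - G.rank) := by
  have hfrob : Function.Bijective fun y : ι → F => y ^ p ^ m :=
    Finite.injective_iff_bijective.mp fun y z h => funext fun i =>
      iterateFrobenius_inj F p m <| by
        simpa only [iterateFrobenius_def, Pi.pow_apply] using congrFun h i
  rw [hermDual_rowSpan, Set.ncard_preimage_of_injective_subset_range hfrob.1
    (hfrob.2.range_eq ▸ Set.subset_univ _), ← Nat.card_coe_set_eq, SetLike.coe_sort_coe,
    Module.natCard_eq_pow_finrank (K := F)]
  have := rank_add_finrank_ker_mulVecLin G
  congr 1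
  omega

theorem rowSpan_subset_hermDual (G : Matrix (Fin k) ι F)
    (horth : G * (G.map (· ^ p ^ m))ᵀ = 0) :
    (rowSpan G : Set (ι → F)) ⊆ hermDual (p ^ m) (rowSpan G) := by
  intro y hy
  rw [rowSpan_eq_range_vecMulLinear] at hy
  obtain ⟨c, rfl⟩ := hy
  have hconj : (c ᵥ* G) ^ p ^ m = (G.map (· ^ p ^ m))ᵀ *ᵥ (c ^ p ^ m) := by
    rw [mulVec_transpose, ← coe_iterateFrobenius_eq_pow]
    exact funext fun j => (iterateFrobenius F p m).map_vecMul G c j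
  rw [hermDual_rowSpan, Set.mem_preimage, SetLike.mem_coe, LinearMap.mem_ker, mulVecLin_apply,
    vecMulLinear_apply, hconj, mulVec_mulVec, horth, zero_mulVec]

theorem rowSpan_eq_hermDual [Finite F] (G : Matrix (Fin k) ι F)
    (horth : G * (G.map (· ^ p ^ m))ᵀ = 0) (hrank : 2 * G.rank = Fintype.card ι) :
    (rowSpan G : Set (ι → F)) = hermDual (p ^ m) (rowSpan G) :=
  Set.eq_of_subset_of_ncard_le (rowSpan_subset_hermDual m G horth)
    (by rw [ncard_rowSpan, ncard_hermDual_rowSpan, show Fintype.card ι - G.rank = G.rank by omega])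
    (Set.toFinite _)

end HermitianDual

section BlockMatrix

variable {R : Type} [CommRing R] {ι : Type} [Fintype ι] [DecidableEq ι]

theorem allOnes_sub_one_mul_self (hcard : (Fintype.card ι : R) = 2) :
    (of (fun _ _ => 1) - 1 : Matrix ι ι R) * (of (fun _ _ => 1) - 1) = 1 := by
  have hJJ : (of (fun _ _ => 1) : Matrix ι ι R) * of (fun _ _ => 1)
      = (Fintype.card ι : R) • of (fun _ _ => 1) := by
    ext i j
    simp [mul_apply]
  calc (of (fun _ _ => 1) - 1 : Matrix ι ι R) * (of (fun _ _ => 1) - 1)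
      = of (fun _ _ => 1) * of (fun _ _ => 1) - (2 : R) • of (fun _ _ => 1) + 1 := by
        rw [sub_mul, mul_sub, mul_sub, mul_one, one_mul, mul_one, two_smul]; abel
    _ = 1 := by rw [hJJ, hcard, sub_self, zero_add]

theorem fromCols_mul_map_transpose_eq_zero (σ : R →+* R) {a : R} (ha : a * σ a = -1)
    {L : Matrix ι ι R} (hL : L * (L.map σ)ᵀ = 1) (hcard : (Fintype.card ι : R) = 2) :
    fromCols (of (fun _ _ => 1) - 1 : Matrix ι ι R) (a • L) *
      ((fromCols (of (fun _ _ => 1) - 1 : Matrix ι ι R) (a • L)).map σ)ᵀ = 0 := by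
  have hJ : (((of fun _ _ => 1) - 1 : Matrix ι ι R).map σ)ᵀ = of (fun _ _ => 1) - 1 := by
    ext i j
    simp [one_apply, apply_ite σ, eq_comm]
  have hL' : (a • L).map σ = σ a • L.map σ := Matrix.map_smulₛₗ σ σ a (map_mul σ a) L
  rw [fromCols_map, transpose_fromCols, fromCols_mul_fromRows, hJ, allOnes_sub_one_mul_self hcard,
    hL', transpose_smul, smul_mul_smul_comm, ha, hL, neg_one_smul, add_neg_cancel]

theorem rank_fromCols_of_isUnit {κ : Type} [Fintype κ] (A : Matrix ι κ R) {B : Matrix ι ι R}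
    [StrongRankCondition R] (hB : IsUnit B) : (fromCols A B).rank = Fintype.card ι := by
  refine le_antisymm (rank_le_card_height _) ?_
  calc Fintype.card ι = B.rank := (rank_of_isUnit B hB).symm
    _ = ((fromCols A B).submatrix id Sum.inr).rank := rfl
    _ ≤ (fromCols A B).rank := rank_submatrix_le _ _ _

end BlockMatrix

theorem stmt5_general (p m q n : ℕ) (hp : p.Prime) (hq : q = p ^ m)
    (hnp : (n : ZMod p) = 2)
    (F : Type) [Field F] [Fintype F] (hF : Fintype.card F = q ^ 2)
    (a : F) (ha : a ^ (q + 1) = -1)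
    (L : Matrix (Fin n) (Fin n) F) (hL : L * (L.map (· ^ q))ᵀ = 1)
    (G : Matrix (Fin n) (Fin n ⊕ Fin n) F)
    (hG : ∀ i j, G i (Sum.inl j) = (if i = j then 0 else 1) ∧
      G i (Sum.inr j) = a * L i j) :
    (rowSpan G : Set (Fin n ⊕ Fin n → F)) = hermDual q (rowSpan G) ∧
    Module.finrank F (rowSpan G) = n := by
  subst hq
  have := Fact.mk hp
  have : CharP F p := charP_of_card_eq_prime_pow (hF.trans (pow_mul p m 2).symm)
  have hσ := coe_iterateFrobenius_eq_pow (F := F) (p := p) m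
  have hn : (Fintype.card (Fin n) : F) = 2 := by
    rw [Fintype.card_fin, ← map_natCast (ZMod.castHom dvd_rfl F), hnp, map_ofNat]
  have hunit : IsUnit (a • L) := by
    refine IsUnit.of_mul_eq_one (-a ^ p ^ m • (L.map (· ^ p ^ m))ᵀ) ?_
    rw [smul_mul_smul_comm, hL, mul_neg, ← pow_succ', ha, neg_neg, one_smul]
  have hGdef : G = fromCols (of (fun _ _ => 1) - 1) (a • L) := by
    ext i (j | j) <;> simp [hG, one_apply, sub_ite]
  have horth : G * (G.map (· ^ p ^ m))ᵀ = 0 := by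
    rw [hGdef, ← hσ]
    refine fromCols_mul_map_transpose_eq_zero _ ?_ (by rwa [hσ]) hn
    rwa [hσ, ← pow_succ']
  have hrank : G.rank = n := by
    rw [hGdef]
    simpa using rank_fromCols_of_isUnit _ hunit
  refine ⟨rowSpan_eq_hermDual m G horth ?_, by rw [finrank_rowSpan, hrank]⟩
  rw [hrank, Fintype.card_sum, Fintype.card_fin]
  ring

/-- if `n ≡ 2 (mod p)`, `a^{q+1} = -1` and `L` is an `n×n` unitary
matrix over `F_{q²}`, then the code generated by `G = (Jₙ - Iₙ | aL)` is a
Hermitian self-dual code of length `2n` and dimension `n`. -/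
theorem stmt5 (p m q n : ℕ) (hp : p.Prime) (hm : 0 < m) (hq : q = p ^ m)
    (hn : 0 < n) (hnp : (n : ZMod p) = 2)
    (F : Type) [Field F] [Fintype F] (hF : Fintype.card F = q ^ 2)
    (a : F) (ha : a ^ (q + 1) = -1)
    (L : Matrix (Fin n) (Fin n) F) (hL : L * (L.map (· ^ q))ᵀ = 1)
    (G : Matrix (Fin n) (Fin n ⊕ Fin n) F)
    (hG : ∀ i j, G i (Sum.inl j) = (if i = j then 0 else 1) ∧
      G i (Sum.inr j) = a * L i j) :
    (rowSpan G : Set (Fin n ⊕ Fin n → F)) = hermDual q (rowSpan G) ∧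
    Module.finrank F (rowSpan G) = n :=
  stmt5_general p m q n hp hq hnp F hF a ha L hL G hG
end

section
/- Let q = p^m be a power of a prime p and a ∈ F_{q²} with a^{q+1} = −1. Let L be an n×n unitary matrix over F_{q²} with rows L₁,…,Lₙ, and suppose α, β, γ, δ, λ, θ ∈ F_{q²} satisfy δ^{q+1} + (n−2) + γ^{q+1} = 0, θ^{q+1} + n·β^{q+1} + α^{q+1} + n·λ^{q+1} = 0, and θδ^q + (n−1)β + αγ^q + λa^q = 0 (integers read in F_{q²}). Then the code generated by the bordered matrix G (with first row (θ, β,…,β, α, λ(L₁+⋯+Lₙ)) and (i+1)-st row (δ, (Jₙ−Iₙ)ᵢ, γ, aLᵢ) for 1 ≤ i ≤ n) is a Hermitian self-orthogonal code of length 2n+2 and dimension at least n. Moreover, if δ = 0 and θ ≠ 0, then this code is Hermitian self-dual of length 2n+2 and dimension n+1. -/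
/-!
Each Gram entry `G_i * G_j` splits along the four column blocks. Unitarity of `L` gives
`L_i * L_j = [i = j]`, `(∑ L_k) * L_j = 1` and `(∑ L_k) * (∑ L_k) = n`, so with `a^{q+1} = -1` the
three hypotheses say exactly that all Gram entries vanish; as `x ↦ x^q` is a field automorphism,
the code is then self-orthogonal. The last `n` rows are independent because their last block is
`a • L` with `L` invertible. If `δ = 0` and `θ ≠ 0`, the first row is the only one with a nonzero
first coordinate, so `G` has rank `n + 1`, half the length, and a self-orthogonal code of half the
length is self-dual.
-/

open Matrix BigOperators Finset

section HermInner

variable {q : ℕ} {F : Type} [CommRing F] {ι κ : Type} [Fintype ι] [Fintype κ]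

lemma hermInner_sumElim (x x' : ι → F) (y y' : κ → F) :
    hermInner q (Sum.elim x y) (Sum.elim x' y') = hermInner q x x' + hermInner q y y' := by
  simp [hermInner, Fintype.sum_sum_type]

lemma hermInner_unit (x y : Unit → F) : hermInner q x y = x () * y () ^ q := by
  simp [hermInner]

lemma hermInner_add_left (x x' y : ι → F) :
    hermInner q (x + x') y = hermInner q x y + hermInner q x' y := by
  simp [hermInner, add_mul, Finset.sum_add_distrib]

lemma hermInner_smul_left (c : F) (x y : ι → F) :
    hermInner q (c • x) y = c * hermInner q x y := by
  simp [hermInner, Finset.mul_sum, mul_assoc]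

lemma hermInner_sum_left {τ : Type} (s : Finset τ) (x : τ → ι → F) (y : ι → F) :
    hermInner q (∑ k ∈ s, x k) y = ∑ k ∈ s, hermInner q (x k) y := by
  simp only [hermInner, Finset.sum_apply, Finset.sum_mul]
  exact Finset.sum_comm

variable (φ : F →+* F)

lemma hermInner_eq_sum_map (hφ : ∀ x, φ x = x ^ q) (x y : ι → F) :
    hermInner q x y = ∑ i, x i * φ (y i) := by
  simp [hermInner, hφ]

lemma hermInner_add_right (hφ : ∀ x, φ x = x ^ q) (x y y' : ι → F) :
    hermInner q x (y + y') = hermInner q x y + hermInner q x y' := by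
  simp [hermInner_eq_sum_map φ hφ, mul_add, Finset.sum_add_distrib]

lemma hermInner_smul_right (hφ : ∀ x, φ x = x ^ q) (c : F) (x y : ι → F) :
    hermInner q x (c • y) = c ^ q * hermInner q x y := by
  simp only [hermInner_eq_sum_map φ hφ, Pi.smul_apply, smul_eq_mul, map_mul, hφ c,
    Finset.mul_sum]
  exact Finset.sum_congr rfl fun _ _ => by ring

lemma hermInner_sum_right (hφ : ∀ x, φ x = x ^ q) {τ : Type} (s : Finset τ) (x : ι → F)
    (y : τ → ι → F) :
    hermInner q x (∑ k ∈ s, y k) = ∑ k ∈ s, hermInner q x (y k) := by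
  simp only [hermInner_eq_sum_map φ hφ, Finset.sum_apply, map_sum, Finset.mul_sum]
  exact Finset.sum_comm

lemma hermInner_swap (hφ : ∀ x, φ x = x ^ q) (hinv : Function.Involutive φ) (x y : ι → F) :
    hermInner q y x = φ (hermInner q x y) := by
  simp [hermInner_eq_sum_map φ hφ, hinv _, mul_comm]

end HermInner

section RowSpan

variable {q : ℕ} {F : Type} [Field F] {ι : Type} [Fintype ι] {k : ℕ}

lemma mem_hermDual_rowSpan_iff (G : Matrix (Fin k) ι F) (y : ι → F) :
    y ∈ hermDual q (rowSpan G) ↔ ∀ i, hermInner q (G i) y = 0 := by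
  refine ⟨fun hy i => hy _ (Submodule.subset_span ⟨i, rfl⟩), fun hy x hx => ?_⟩
  induction hx using Submodule.span_induction with
  | mem _ hx => obtain ⟨i, rfl⟩ := hx; exact hy i
  | zero => simp [hermInner]
  | add _ _ _ _ hx hx' => rw [hermInner_add_left, hx, hx', add_zero]
  | smul c _ _ hx => rw [hermInner_smul_left, hx, mul_zero]

lemma rowSpan_subset_hermDual_iff (φ : F →+* F) (hφ : ∀ x, φ x = x ^ q)
    (G : Matrix (Fin k) ι F) :
    (rowSpan G : Set (ι → F)) ⊆ hermDual q (rowSpan G) ↔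
      ∀ i j, hermInner q (G i) (G j) = 0 := by
  refine ⟨fun h i j => (mem_hermDual_rowSpan_iff G _).1 (h (Submodule.subset_span ⟨j, rfl⟩)) i,
    fun h y hy => (mem_hermDual_rowSpan_iff G y).2 fun i => ?_⟩
  induction hy using Submodule.span_induction with
  | mem _ hy => obtain ⟨j, rfl⟩ := hy; exact h i j
  | zero => simp [hermInner_eq_sum_map φ hφ]
  | add _ _ _ _ hy hy' => rw [hermInner_add_right φ hφ, hy, hy', add_zero]
  | smul c _ _ hy => rw [hermInner_smul_right φ hφ, hy, mul_zero]

lemma card_le_finrank_rowSpan {κ : Type} [Fintype κ]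
    (G : Matrix (Fin k) ι F) (f : κ → Fin k) (hG : LinearIndependent F fun i => G (f i)) :
    Fintype.card κ ≤ Module.finrank F (rowSpan G) :=
  (finrank_span_eq_card hG).symm.le.trans
    (Submodule.finrank_mono (Submodule.span_mono (Set.range_comp_subset_range f fun i => G i)))

end RowSpan

section FiniteField

variable {q : ℕ} {F : Type} [Field F] [Fintype F]

lemma exists_involutive_ringHom_eq_pow_of_card_eq_sq (hF : Fintype.card F = q ^ 2) :
    ∃ φ : F →+* F, (∀ x, φ x = x ^ q) ∧ Function.Involutive φ := by
  obtain ⟨k, hp, hk⟩ := FiniteField.card F (ringChar F)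
  obtain ⟨i, -, rfl⟩ := (Nat.dvd_prime_pow hp).1 (hk ▸ hF ▸ Dvd.intro_left _ (sq q).symm)
  have : Fact (ringChar F).Prime := ⟨hp⟩
  refine ⟨iterateFrobenius F (ringChar F) i, iterateFrobenius_def _ _, fun x => ?_⟩
  rw [iterateFrobenius_def, iterateFrobenius_def, ← pow_mul, ← sq, ← hF, FiniteField.pow_card]

/- `y ↦ φ ∘ y` maps the Hermitian dual bijectively onto `ker G`, which has the same dimension as
the row span when the latter is half the length. -/
lemma rowSpan_eq_hermDual_of_finrank {ι : Type} [Fintype ι] {k : ℕ}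
    (φ : F →+* F) (hφ : ∀ x, φ x = x ^ q) (G : Matrix (Fin k) ι F)
    (hsub : (rowSpan G : Set (ι → F)) ⊆ hermDual q (rowSpan G))
    (hdim : 2 * Module.finrank F (rowSpan G) = Fintype.card ι) :
    (rowSpan G : Set (ι → F)) = hermDual q (rowSpan G) := by
  have hφbij : Function.Bijective φ :=
    ⟨φ.injective, Finite.injective_iff_surjective.1 φ.injective⟩
  let e : (ι → F) ≃ (ι → F) := Equiv.ofBijective _ hφbij.comp_left
  have hdual : ∀ y, y ∈ hermDual q (rowSpan G) ↔ e y ∈ LinearMap.ker G.mulVecLin := by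
    intro y
    simp only [mem_hermDual_rowSpan_iff, LinearMap.mem_ker, Matrix.mulVecLin_apply,
      funext_iff, Pi.zero_apply, hermInner_eq_sum_map φ hφ]
    rfl
  have hker : Module.finrank F (LinearMap.ker G.mulVecLin) = Module.finrank F (rowSpan G) := by
    have := LinearMap.finrank_range_add_finrank_ker G.mulVecLin
    rw [Module.finrank_fintype_fun_eq_card, ← hdim] at this
    have hrank : Module.finrank F (LinearMap.range G.mulVecLin) = Module.finrank F (rowSpan G) :=
      G.rank_eq_finrank_span_row
    omega
  refine Set.eq_of_subset_of_ncard_le hsub ?_ (Set.toFinite _)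
  rw [← Nat.card_coe_set_eq, ← Nat.card_coe_set_eq,
    Nat.card_congr (e.subtypeEquiv hdual), SetLike.coe_sort_coe,
    Module.natCard_eq_pow_finrank (K := F) (V := LinearMap.ker G.mulVecLin),
    Module.natCard_eq_pow_finrank (K := F) (V := rowSpan G), hker]

end FiniteField

section Unitary

variable {q : ℕ} {F : Type} [CommRing F] {m : Type} [Fintype m] [DecidableEq m]
  {L : Matrix m m F}

lemma hermInner_rows_of_unitary (hL : L * (L.map (· ^ q))ᵀ = 1) (i j : m) :
    hermInner q (L.row i) (L.row j) = (1 : Matrix m m F) i j := by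
  simpa [hermInner, Matrix.mul_apply] using congrFun (congrFun hL i) j

lemma hermInner_sum_rows_left_of_unitary (hL : L * (L.map (· ^ q))ᵀ = 1) (j : m) :
    hermInner q (∑ k, L.row k) (L.row j) = 1 := by
  rw [hermInner_sum_left]
  simp [hermInner_rows_of_unitary hL, Matrix.one_apply]

lemma hermInner_sum_rows_of_unitary (φ : F →+* F) (hφ : ∀ x, φ x = x ^ q)
    (hL : L * (L.map (· ^ q))ᵀ = 1) :
    hermInner q (∑ k, L.row k) (∑ k, L.row k) = Fintype.card m := by
  rw [hermInner_sum_right φ hφ]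
  simp [hermInner_sum_rows_left_of_unitary hL]

end Unitary

section OffDiagonal

variable {q : ℕ} {F : Type} [CommRing F] {m : Type} [Fintype m] [DecidableEq m]

lemma hermInner_const_offDiag (hq : q ≠ 0) (β : F) (i : m) :
    hermInner q (fun _ => β) (fun j => if j = i then 0 else 1) = (Fintype.card m - 1) * β := by
  simp [hermInner, ite_pow, zero_pow hq, Finset.sum_ite, Finset.filter_ne',
    Nat.cast_sub (Fintype.card_pos_iff.2 ⟨i⟩)]

lemma hermInner_offDiag_offDiag (hq : q ≠ 0) (i i' : m) :
    hermInner q (fun j => if j = i then (0 : F) else 1) (fun j => if j = i' then 0 else 1) =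
      Fintype.card m - 2 + if i = i' then 1 else 0 := by
  have hrow : ∀ i j : m, (if j = i then (0 : F) else 1) = 1 - if j = i then 1 else 0 := by
    intro i j; split_ifs <;> simp
  simp only [hermInner, hrow]
  calc _ = ∑ j : m, (1 - ((if j = i then 1 else 0) + (if j = i' then 1 else 0)) +
        if j = i then (if i = i' then (1 : F) else 0) else 0) :=
        Finset.sum_congr rfl fun j _ => by split_ifs <;> simp_all
    _ = _ := by
      simp [Finset.sum_add_distrib, Finset.sum_sub_distrib]
      ring

end OffDiagonal

section Bordered

variable {q : ℕ} {F : Type} [CommRing F] {n : ℕ}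

def borderedMatrix (a : F) (L : Matrix (Fin n) (Fin n) F) (θ β α lam δ γ : F) :
    Matrix (Fin (n + 1)) ((Unit ⊕ Fin n) ⊕ (Unit ⊕ Fin n)) F :=
  Matrix.of <| Fin.cons
    (Sum.elim (Sum.elim (fun _ => θ) (fun _ => β)) (Sum.elim (fun _ => α) (lam • ∑ k, L.row k)))
    fun i => Sum.elim (Sum.elim (fun _ => δ) (fun j => if j = i then 0 else 1))
      (Sum.elim (fun _ => γ) (a • L.row i))

variable (a : F) (L : Matrix (Fin n) (Fin n) F) (θ β α lam δ γ : F)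

@[simp]
lemma borderedMatrix_zero : borderedMatrix a L θ β α lam δ γ 0 =
    Sum.elim (Sum.elim (fun _ => θ) (fun _ => β)) (Sum.elim (fun _ => α) (lam • ∑ k, L.row k)) :=
  rfl

@[simp]
lemma borderedMatrix_succ (i : Fin n) : borderedMatrix a L θ β α lam δ γ i.succ =
    Sum.elim (Sum.elim (fun _ => δ) (fun j => if j = i then 0 else 1))
      (Sum.elim (fun _ => γ) (a • L.row i)) :=
  rfl

variable {a L θ β α lam δ γ}

lemma hermInner_borderedMatrix_zero_zero (φ : F →+* F) (hφ : ∀ x, φ x = x ^ q)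
    (hL : L * (L.map (· ^ q))ᵀ = 1) :
    hermInner q (borderedMatrix a L θ β α lam δ γ 0) (borderedMatrix a L θ β α lam δ γ 0) =
      θ ^ (q + 1) + n * β ^ (q + 1) + α ^ (q + 1) + n * lam ^ (q + 1) := by
  simp only [borderedMatrix_zero, hermInner_sumElim, hermInner_unit, hermInner_smul_left,
    hermInner_smul_right φ hφ, hermInner_sum_rows_of_unitary φ hφ hL]
  simp only [hermInner, sum_const, card_univ, Fintype.card_fin, nsmul_eq_mul, pow_succ]
  ring

lemma hermInner_borderedMatrix_zero_succ (φ : F →+* F) (hφ : ∀ x, φ x = x ^ q) (hq : q ≠ 0)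
    (hL : L * (L.map (· ^ q))ᵀ = 1) (i : Fin n) :
    hermInner q (borderedMatrix a L θ β α lam δ γ 0) (borderedMatrix a L θ β α lam δ γ i.succ) =
      θ * δ ^ q + (n - 1) * β + α * γ ^ q + lam * a ^ q := by
  simp only [borderedMatrix_zero, borderedMatrix_succ, hermInner_sumElim, hermInner_unit,
    hermInner_smul_left, hermInner_smul_right φ hφ, hermInner_const_offDiag hq,
    hermInner_sum_rows_left_of_unitary hL, Fintype.card_fin]
  ring

lemma hermInner_borderedMatrix_succ_succ (φ : F →+* F) (hφ : ∀ x, φ x = x ^ q) (hq : q ≠ 0)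
    (hL : L * (L.map (· ^ q))ᵀ = 1) (i j : Fin n) :
    hermInner q (borderedMatrix a L θ β α lam δ γ i.succ)
        (borderedMatrix a L θ β α lam δ γ j.succ) =
      δ ^ (q + 1) + (n - 2 + if i = j then 1 else 0) + γ ^ (q + 1) +
        a ^ (q + 1) * if i = j then 1 else 0 := by
  simp only [borderedMatrix_succ, hermInner_sumElim, hermInner_unit, hermInner_smul_left,
    hermInner_smul_right φ hφ, hermInner_offDiag_offDiag hq, hermInner_rows_of_unitary hL,
    Matrix.one_apply, Fintype.card_fin]
  ring

end Bordered

section BorderedField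

variable {q : ℕ} {F : Type} [Field F] {n : ℕ} {a : F} {L : Matrix (Fin n) (Fin n) F}
  {θ β α lam δ γ : F}

lemma rowSpan_borderedMatrix_subset_hermDual (φ : F →+* F) (hφ : ∀ x, φ x = x ^ q)
    (hinv : Function.Involutive φ) (hq : q ≠ 0) (ha : a ^ (q + 1) = -1)
    (hL : L * (L.map (· ^ q))ᵀ = 1)
    (h1 : δ ^ (q + 1) + ((n : F) - 2) + γ ^ (q + 1) = 0)
    (h2 : θ ^ (q + 1) + (n : F) * β ^ (q + 1) + α ^ (q + 1) + (n : F) * lam ^ (q + 1) = 0)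
    (h3 : θ * δ ^ q + ((n : F) - 1) * β + α * γ ^ q + lam * a ^ q = 0) :
    (rowSpan (borderedMatrix a L θ β α lam δ γ) : Set ((Unit ⊕ Fin n) ⊕ (Unit ⊕ Fin n) → F)) ⊆
      hermDual q (rowSpan (borderedMatrix a L θ β α lam δ γ)) := by
  have h01 : ∀ j : Fin n, hermInner q (borderedMatrix a L θ β α lam δ γ 0)
      (borderedMatrix a L θ β α lam δ γ j.succ) = 0 := fun j => by
    rw [hermInner_borderedMatrix_zero_succ φ hφ hq hL, h3]
  rw [rowSpan_subset_hermDual_iff φ hφ]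
  intro i j
  induction i using Fin.cases with
  | zero => induction j using Fin.cases with
    | zero => rw [hermInner_borderedMatrix_zero_zero φ hφ hL, h2]
    | succ j => exact h01 j
  | succ i => induction j using Fin.cases with
    | zero => rw [hermInner_swap φ hφ hinv, h01, map_zero]
    | succ j =>
      rw [hermInner_borderedMatrix_succ_succ φ hφ hq hL, ha]
      linear_combination h1

lemma linearIndependent_borderedMatrix_succ (ha : a ≠ 0) (hL : IsUnit L) :
    LinearIndependent F fun i : Fin n => borderedMatrix a L θ β α lam δ γ i.succ := by
  apply LinearIndependent.of_comp (LinearMap.funLeft F F (Sum.inr ∘ Sum.inr))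
  convert Matrix.linearIndependent_rows_of_isUnit (hL.smul (Units.mk0 a ha))
  ext i j
  simp [Units.smul_def, LinearMap.funLeft_apply]

lemma linearIndependent_borderedMatrix (ha : a ≠ 0) (hL : IsUnit L) (hθ : θ ≠ 0) :
    LinearIndependent F (borderedMatrix a L θ β α lam 0 γ).row := by
  rw [← Fin.cons_self_tail (borderedMatrix a L θ β α lam 0 γ).row, linearIndependent_finCons]
  refine ⟨linearIndependent_borderedMatrix_succ ha hL, fun hmem => hθ ?_⟩
  have hspan : Submodule.span F (Set.range (Fin.tail (borderedMatrix a L θ β α lam 0 γ).row)) ≤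
      LinearMap.ker (LinearMap.proj (Sum.inl (Sum.inl ()))) :=
    Submodule.span_le.2 <| by rintro _ ⟨i, rfl⟩; simp [Fin.tail]
  simpa using hspan hmem

end BorderedField

theorem stmt7_general (q n : ℕ)
    (F : Type) [Field F] [Fintype F] (hF : Fintype.card F = q ^ 2)
    (a : F) (ha : a ^ (q + 1) = -1)
    (L : Matrix (Fin n) (Fin n) F) (hL : L * (L.map (· ^ q))ᵀ = 1)
    (α β γ δ lam θ : F)
    (h1 : δ ^ (q + 1) + ((n : F) - 2) + γ ^ (q + 1) = 0)
    (h2 : θ ^ (q + 1) + (n : F) * β ^ (q + 1) + α ^ (q + 1) + (n : F) * lam ^ (q + 1) = 0)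
    (h3 : θ * δ ^ q + ((n : F) - 1) * β + α * γ ^ q + lam * a ^ q = 0)
    (G : Matrix (Fin (n + 1)) ((Unit ⊕ Fin n) ⊕ (Unit ⊕ Fin n)) F)
    (hG1 : G 0 (Sum.inl (Sum.inl ())) = θ)
    (hG2 : ∀ j, G 0 (Sum.inl (Sum.inr j)) = β)
    (hG3 : G 0 (Sum.inr (Sum.inl ())) = α)
    (hG4 : ∀ j, G 0 (Sum.inr (Sum.inr j)) = lam * ∑ k, L k j)
    (hG5 : ∀ i : Fin n, G i.succ (Sum.inl (Sum.inl ())) = δ)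
    (hG6 : ∀ i j : Fin n, G i.succ (Sum.inl (Sum.inr j)) = if j = i then 0 else 1)
    (hG7 : ∀ i : Fin n, G i.succ (Sum.inr (Sum.inl ())) = γ)
    (hG8 : ∀ i j : Fin n, G i.succ (Sum.inr (Sum.inr j)) = a * L i j) :
    ((rowSpan G : Set ((Unit ⊕ Fin n) ⊕ (Unit ⊕ Fin n) → F)) ⊆ hermDual q (rowSpan G) ∧
      n ≤ Module.finrank F (rowSpan G)) ∧
    (δ = 0 → θ ≠ 0 →
      (rowSpan G : Set ((Unit ⊕ Fin n) ⊕ (Unit ⊕ Fin n) → F)) = hermDual q (rowSpan G) ∧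
      Module.finrank F (rowSpan G) = n + 1) := by
  obtain ⟨φ, hφ, hinv⟩ := exists_involutive_ringHom_eq_pow_of_card_eq_sq hF
  have hq : q ≠ 0 := by rintro rfl; simp at hF
  have ha0 : a ≠ 0 := by rintro rfl; simp [hq] at ha
  have hLunit : IsUnit L := (L.isUnit_iff_isUnit_det).2 (Matrix.isUnit_det_of_right_inverse hL)
  have hG : G = borderedMatrix a L θ β α lam δ γ := by
    ext i ((_ | j) | (_ | j)) <;> induction i using Fin.cases <;>
      simp [hG1, hG2, hG3, hG4, hG5, hG6, hG7, hG8, Finset.sum_apply]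
  subst hG
  have horth := rowSpan_borderedMatrix_subset_hermDual φ hφ hinv hq ha hL h1 h2 h3
  refine ⟨⟨horth, ?_⟩, fun hδ hθ => ?_⟩
  · simpa using
      card_le_finrank_rowSpan _ Fin.succ (linearIndependent_borderedMatrix_succ ha0 hLunit)
  · subst hδ
    have hdim : Module.finrank F (rowSpan (borderedMatrix a L θ β α lam 0 γ)) = n + 1 :=
      (finrank_span_eq_card (linearIndependent_borderedMatrix ha0 hLunit hθ)).trans
        (Fintype.card_fin _)
    refine ⟨rowSpan_eq_hermDual_of_finrank φ hφ _ horth ?_, hdim⟩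
    simp only [hdim, Fintype.card_sum, Fintype.card_unique, Fintype.card_fin]
    ring

/-- Lemma 3 of the paper. For `a^{q+1} = -1`, `L` an `n×n` unitary
matrix with rows `L₁,…,Lₙ`, and `α, β, γ, δ, λ, θ` satisfying the three equations,
the bordered matrix `G` generates a Hermitian self-orthogonal code of length
`2n+2` and dimension at least `n`; if moreover `δ = 0` and `θ ≠ 0`, the code is
Hermitian self-dual of dimension `n+1`. -/
theorem stmt7 (p m q n : ℕ) (hp : p.Prime) (hm : 0 < m) (hq : q = p ^ m)
    (F : Type) [Field F] [Fintype F] (hF : Fintype.card F = q ^ 2)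
    (a : F) (ha : a ^ (q + 1) = -1)
    (L : Matrix (Fin n) (Fin n) F) (hL : L * (L.map (· ^ q))ᵀ = 1)
    (α β γ δ lam θ : F)
    (h1 : δ ^ (q + 1) + ((n : F) - 2) + γ ^ (q + 1) = 0)
    (h2 : θ ^ (q + 1) + (n : F) * β ^ (q + 1) + α ^ (q + 1) + (n : F) * lam ^ (q + 1) = 0)
    (h3 : θ * δ ^ q + ((n : F) - 1) * β + α * γ ^ q + lam * a ^ q = 0)
    (G : Matrix (Fin (n + 1)) ((Unit ⊕ Fin n) ⊕ (Unit ⊕ Fin n)) F)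
    (hG1 : G 0 (Sum.inl (Sum.inl ())) = θ)
    (hG2 : ∀ j, G 0 (Sum.inl (Sum.inr j)) = β)
    (hG3 : G 0 (Sum.inr (Sum.inl ())) = α)
    (hG4 : ∀ j, G 0 (Sum.inr (Sum.inr j)) = lam * ∑ k, L k j)
    (hG5 : ∀ i : Fin n, G i.succ (Sum.inl (Sum.inl ())) = δ)
    (hG6 : ∀ i j : Fin n, G i.succ (Sum.inl (Sum.inr j)) = if j = i then 0 else 1)
    (hG7 : ∀ i : Fin n, G i.succ (Sum.inr (Sum.inl ())) = γ)
    (hG8 : ∀ i j : Fin n, G i.succ (Sum.inr (Sum.inr j)) = a * L i j) :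
    ((rowSpan G : Set ((Unit ⊕ Fin n) ⊕ (Unit ⊕ Fin n) → F)) ⊆ hermDual q (rowSpan G) ∧
      n ≤ Module.finrank F (rowSpan G)) ∧
    (δ = 0 → θ ≠ 0 →
      (rowSpan G : Set ((Unit ⊕ Fin n) ⊕ (Unit ⊕ Fin n) → F)) = hermDual q (rowSpan G) ∧
      Module.finrank F (rowSpan G) = n + 1) :=
  stmt7_general q n F hF a ha L hL α β γ δ lam θ h1 h2 h3 G hG1 hG2 hG3 hG4 hG5 hG6 hG7 hG8
end

section
/- Let q = p^m be a power of a prime p, a ∈ F_{q²}, L an n×n unitary matrix over F_{q²}, and θ, β, α, γ, λ ∈ F_{q²}, and set δ = 1. Let g₁,…,g_{n+1} denote the rows of the bordered matrix G (with first row g₁ = (θ, β,…,β, α, λ(L₁+⋯+Lₙ)) and g_{i+1} = (δ, (Jₙ−Iₙ)ᵢ, γ, aLᵢ) for 1 ≤ i ≤ n). If g₁ lies in the F_{q²}-span of g₂,…,g_{n+1}, then there exists ε ∈ F_{q²} such that θ = εn and β = ε(n−1). -/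
open Matrix BigOperators Finset

/-- Lemma 4 of the paper. With `δ = 1`, if the first row `g₁` of the
bordered matrix `G` lies in the span of the other rows `g₂,…,g_{n+1}`, then
`θ = εn` and `β = ε(n-1)` for some `ε ∈ F_{q²}`. -/
theorem stmt10 (p m q n : ℕ) (hp : p.Prime) (hm : 0 < m) (hq : q = p ^ m)
    (F : Type) [Field F] [Fintype F] (hF : Fintype.card F = q ^ 2)
    (a : F)
    (L : Matrix (Fin n) (Fin n) F) (hL : L * (L.map (· ^ q))ᵀ = 1)
    (α β γ δ lam θ : F)
    (hδ : δ = 1)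
    (G : Matrix (Fin (n + 1)) ((Unit ⊕ Fin n) ⊕ (Unit ⊕ Fin n)) F)
    (hG1 : G 0 (Sum.inl (Sum.inl ())) = θ)
    (hG2 : ∀ j, G 0 (Sum.inl (Sum.inr j)) = β)
    (hG3 : G 0 (Sum.inr (Sum.inl ())) = α)
    (hG4 : ∀ j, G 0 (Sum.inr (Sum.inr j)) = lam * ∑ k, L k j)
    (hG5 : ∀ i : Fin n, G i.succ (Sum.inl (Sum.inl ())) = δ)
    (hG6 : ∀ i j : Fin n, G i.succ (Sum.inl (Sum.inr j)) = if j = i then 0 else 1)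
    (hG7 : ∀ i : Fin n, G i.succ (Sum.inr (Sum.inl ())) = γ)
    (hG8 : ∀ i j : Fin n, G i.succ (Sum.inr (Sum.inr j)) = a * L i j)
    (hspan : G 0 ∈ Submodule.span F (Set.range fun i : Fin n => G i.succ)) :
    ∃ ε : F, θ = ε * (n : F) ∧ β = ε * ((n : F) - 1) := by
  rw [Submodule.mem_span_range_iff_exists_fun] at hspan
  obtain ⟨c, hc⟩ := hspan
  have hsum : ∑ i, c i = θ := by
    have := congrArg (fun f => f (Sum.inl (Sum.inl ()))) hc
    simpa [hG1, hG5, hδ] using this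
  have hcj : ∀ i : Fin n, c i = θ - β := by
    intro j
    have h1 := congrArg (fun f => f (Sum.inl (Sum.inr j))) hc
    simp only [Finset.sum_apply, Pi.smul_apply, smul_eq_mul, hG6, hG2] at h1
    have h2 : (∑ x, c x * if j = x then 0 else 1)
        = (∑ x, c x) - ∑ x, (if j = x then c x else 0) := by
      rw [← Finset.sum_sub_distrib]
      refine Finset.sum_congr rfl fun x _ => by by_cases h : j = x <;> simp [h]
    rw [h2, Finset.sum_ite_eq, if_pos (Finset.mem_univ j), hsum] at h1
    linear_combination -h1
  have h3 : ∑ i, c i = (θ - β) * n := by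
    rw [Finset.sum_congr rfl fun i _ => hcj i, Finset.sum_const, card_univ,
      Fintype.card_fin, nsmul_eq_mul, mul_comm]
  have hn' : θ = (θ - β) * n := hsum.symm.trans h3
  exact ⟨θ - β, hn', by linear_combination hn'⟩
end

section
/- Let q = p^m be a power of a prime p, a ∈ F_{q²} with a^{q+1} = −1, and L an n×n unitary matrix over F_{q²}. Suppose n ≢ 2 (mod p), δ = 1, γ ∈ F_{q²} satisfies γ^{q+1} = 1−n with 1−n ≠ 0 in F_{q²}, θ ∈ F_{q²} is nonzero, β = θ(1+aγ^q)·(2−n)^{−1}, α = aθ, and λ = βa. Then the code generated by the bordered matrix G (with first row (θ, β,…,β, α, λ(L₁+⋯+Lₙ)) and (i+1)-st row (δ, (Jₙ−Iₙ)ᵢ, γ, aLᵢ)) is a Hermitian self-dual code of length 2n+2 and dimension n+1. -/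
open Matrix BigOperators Finset

/-- Theorem 2, case 4) of the paper. With `n ≢ 2 (mod p)`, `δ = 1`,
`γ^{q+1} = 1 - n ≠ 0`, `θ ≠ 0`, `β = θ(1 + aγ^q)·(2-n)⁻¹`, `α = aθ`, `λ = βa`,
the bordered matrix `G` generates a Hermitian self-dual code of length `2n+2`
and dimension `n+1`. -/
theorem stmt12 (p m q n : ℕ) (hp : p.Prime) (hm : 0 < m) (hq : q = p ^ m)
    (hnp : (n : ZMod p) ≠ 2)
    (F : Type) [Field F] [Fintype F] (hF : Fintype.card F = q ^ 2)
    (a : F) (ha : a ^ (q + 1) = -1)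
    (L : Matrix (Fin n) (Fin n) F) (hL : L * (L.map (· ^ q))ᵀ = 1)
    (α β γ δ lam θ : F)
    (hδ : δ = 1)
    (hγ : γ ^ (q + 1) = 1 - (n : F)) (hγ0 : (1 : F) - (n : F) ≠ 0)
    (hθ : θ ≠ 0)
    (hβ : β = θ * (1 + a * γ ^ q) * (2 - (n : F))⁻¹)
    (hα : α = a * θ)
    (hlam : lam = β * a)
    (G : Matrix (Fin (n + 1)) ((Unit ⊕ Fin n) ⊕ (Unit ⊕ Fin n)) F)
    (hG1 : G 0 (Sum.inl (Sum.inl ())) = θ)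
    (hG2 : ∀ j, G 0 (Sum.inl (Sum.inr j)) = β)
    (hG3 : G 0 (Sum.inr (Sum.inl ())) = α)
    (hG4 : ∀ j, G 0 (Sum.inr (Sum.inr j)) = lam * ∑ k, L k j)
    (hG5 : ∀ i : Fin n, G i.succ (Sum.inl (Sum.inl ())) = δ)
    (hG6 : ∀ i j : Fin n, G i.succ (Sum.inl (Sum.inr j)) = if j = i then 0 else 1)
    (hG7 : ∀ i : Fin n, G i.succ (Sum.inr (Sum.inl ())) = γ)
    (hG8 : ∀ i j : Fin n, G i.succ (Sum.inr (Sum.inr j)) = a * L i j) :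
    (rowSpan G : Set ((Unit ⊕ Fin n) ⊕ (Unit ⊕ Fin n) → F)) = hermDual q (rowSpan G) ∧
    Module.finrank F (rowSpan G) = n + 1 := by
  classical
  subst hδ hα hlam
  haveI hpf : Fact p.Prime := ⟨hp⟩
  haveI hcharF : CharP F p := by
    have h := Nat.cast_card_eq_zero F
    rw [hF, hq, ← pow_mul] at h
    push_cast at h
    have hp0 : (p : F) = 0 :=
      pow_eq_zero_iff (n := m * 2) (by omega) |>.mp h
    exact (CharP.charP_iff_prime_eq_zero hp).mpr hp0
  have hq0 : q ≠ 0 := by subst hq; exact pow_ne_zero m hp.pos.ne'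
  have hadd : ∀ x y : F, (x + y) ^ q = x ^ q + y ^ q := by
    subst hq; exact fun x y => add_pow_char_pow x y p m
  let σ : F →+* F := {
    toFun := (· ^ q)
    map_one' := one_pow q
    map_mul' := fun x y => mul_pow x y q
    map_zero' := zero_pow hq0
    map_add' := hadd }
  have hσ : ∀ x : F, σ x = x ^ q := fun _ => rfl
  have hσσ : ∀ x : F, (x ^ q) ^ q = x := by
    intro x
    have h := FiniteField.pow_card x
    rw [← pow_mul, ← sq, ← hF, h]
  have hpow_sum : ∀ (g : Fin n → F), (∑ k, g k) ^ q = ∑ k, (g k) ^ q := by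
    intro g
    simpa [hσ] using map_sum σ g Finset.univ
  -- the field element 2 - n is nonzero
  have h2n : (2 : F) - (n : F) ≠ 0 := by
    intro h
    apply hnp
    have hnF : (n : F) = 2 := by linear_combination -h
    have hinj : Function.Injective (ZMod.castHom (dvd_refl p) F) :=
      (ZMod.castHom (dvd_refl p) F).injective
    apply hinj
    rw [map_natCast, map_ofNat]
    exact hnF
  -- basic algebraic facts
  have ha' : a * a ^ q = -1 := by rw [← ha, pow_succ, mul_comm]
  have ha0 : a ≠ 0 := by
    intro h; rw [h, zero_pow (by omega : q + 1 ≠ 0)] at ha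
    exact one_ne_zero (neg_eq_zero.mp ha.symm)
  have hγ' : γ * γ ^ q = 1 - (n : F) := by rw [← hγ, pow_succ, mul_comm]
  have hβ' : β * (2 - (n : F)) = θ * (1 + a * γ ^ q) := by
    rw [hβ]; field_simp
  have hβσ : β ^ q * (2 - (n : F)) = θ ^ q * (1 + a ^ q * γ) := by
    have hsub2 : ∀ x y : F, (x - y) ^ q = x ^ q - y ^ q := by
      intro x y
      have h := hadd (x - y) y
      rw [sub_add_cancel] at h
      linear_combination -h
    have h2q : ((2:F)) ^ q = 2 := map_ofNat σ 2
    have hnq : ((n:F)) ^ q = (n:F) := map_natCast σ n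
    have h := congrArg (· ^ q) hβ'
    simp only [mul_pow, hsub2, hadd, h2q, hnq, one_pow, hσσ] at h
    exact h
  -- unitary matrix sums
  have hLe : ∀ i j, ∑ k, L i k * (L j k) ^ q = if i = j then 1 else 0 := by
    intro i j
    have h := congrFun (congrFun hL i) j
    simpa [Matrix.mul_apply, Matrix.one_apply] using h
  have key3 : ∀ i, ∑ j, (∑ k, L k j) * (L i j) ^ q = 1 := by
    intro i
    simp_rw [Finset.sum_mul]
    rw [Finset.sum_comm]
    simp_rw [hLe]
    simp
  have key4 : ∀ i, ∑ j, L i j * ((∑ k, L k j)) ^ q = 1 := by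
    intro i
    simp_rw [hpow_sum, Finset.mul_sum]
    rw [Finset.sum_comm]
    simp_rw [hLe]
    simp
  have key2 : ∑ j, (∑ k, L k j) * ((∑ k, L k j)) ^ q = (n : F) := by
    simp_rw [hpow_sum, Finset.sum_mul, Finset.mul_sum]
    rw [Finset.sum_comm]
    have : ∀ k : Fin n, ∑ j, ∑ l, L k j * (L l j) ^ q = 1 := by
      intro k
      rw [Finset.sum_comm]
      simp_rw [hLe]
      simp
    simp_rw [this]
    simp [Finset.card_univ]
  -- sums of indicator-type functions
  have hone : ∀ (i : Fin n) (c : F), ∑ k : Fin n, (if k = i then 0 else c) = n * c - c := by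
    intro i c
    have h : ∀ k : Fin n, (if k = i then (0:F) else c) = c - (if k = i then c else 0) := by
      intro k; split <;> ring
    simp_rw [h]
    rw [Finset.sum_sub_distrib, Finset.sum_ite_eq' univ i (fun _ => c)]
    simp [Finset.card_univ, mul_comm]
  have hJJ : ∀ i j : Fin n, ∑ k, (if k = i then (0:F) else 1) * (if k = j then 0 else 1)
      = (n : F) - 1 - 1 + (if i = j then 1 else 0) := by
    intro i j
    have h : ∀ k : Fin n, (if k = i then (0:F) else 1) * (if k = j then 0 else 1)
        = 1 - (if k = i then (1:F) else 0) - (if k = j then (1:F) else 0)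
          + (if k = i then (if i = j then (1:F) else 0) else 0) := by
      intro k
      by_cases h1 : k = i <;> by_cases h2 : k = j
      · have hij : i = j := by rw [← h1, h2]
        simp [h1, h2, ← hij]
      · have hij : i ≠ j := fun hh => h2 (h1.trans hh)
        simp [h1, h2, hij]
      · have hji : j ≠ i := fun hh => h1 (h2.trans hh)
        simp [h1, h2, hji]
      · simp [h1, h2]
    simp_rw [h]
    rw [Finset.sum_add_distrib, Finset.sum_sub_distrib, Finset.sum_sub_distrib,
      Finset.sum_ite_eq' univ i (fun _ => (1:F)), Finset.sum_ite_eq' univ j (fun _ => (1:F)),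
      Finset.sum_ite_eq' univ i (fun _ => (if i = j then (1:F) else 0))]
    simp [Finset.card_univ]
  -- splitting of the hermitian inner product over the index sum type
  have hsplit : ∀ x y : (Unit ⊕ Fin n) ⊕ (Unit ⊕ Fin n) → F,
      hermInner q x y = x (Sum.inl (Sum.inl ())) * (y (Sum.inl (Sum.inl ())))^q
      + (∑ j, x (Sum.inl (Sum.inr j)) * (y (Sum.inl (Sum.inr j)))^q)
      + x (Sum.inr (Sum.inl ())) * (y (Sum.inr (Sum.inl ())))^q
      + ∑ j, x (Sum.inr (Sum.inr j)) * (y (Sum.inr (Sum.inr j)))^q := by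
    intro x y
    simp [hermInner, Fintype.sum_sum_type]
    ring
  -- orthogonality of the rows
  have horth : ∀ i j, hermInner q (G i) (G j) = 0 := by
    intro i j
    induction i using Fin.cases with
    | zero =>
      induction j using Fin.cases with
      | zero =>
        rw [hsplit]
        simp only [hG1, hG2, hG3, hG4]
        have e : ∀ j : Fin n, (β * a * ∑ k, L k j) * ((β * a * ∑ k, L k j)) ^ q
            = (β * a * ((β * a) ^ q)) * ((∑ k, L k j) * ((∑ k, L k j)) ^ q) := by
          intro j; rw [mul_pow]; ring
        simp_rw [e]
        rw [Finset.sum_const, Finset.card_univ, ← Finset.mul_sum, key2]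
        simp only [Fintype.card_fin, nsmul_eq_mul, mul_pow]
        linear_combination (θ * θ ^ q + (n : F) * (β * β ^ q)) * ha'
      | succ j =>
        rw [hsplit]
        simp only [hG1, hG2, hG3, hG4, hG5, hG6, hG7, hG8]
        have e1 : ∀ k : Fin n, β * ((if k = j then (0:F) else 1)) ^ q
            = (if k = j then (0:F) else β) := by
          intro k; split <;> simp [zero_pow hq0]
        simp_rw [e1, hone]
        have e2 : ∀ k : Fin n, (β * a * ∑ l, L l k) * ((a * L j k)) ^ q
            = (β * a * a ^ q) * ((∑ l, L l k) * (L j k) ^ q) := by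
          intro k; rw [mul_pow]; ring
        simp_rw [e2]
        rw [← Finset.mul_sum, key3]
        simp only [one_pow]
        linear_combination β * ha' - hβ'
    | succ i =>
      induction j using Fin.cases with
      | zero =>
        rw [hsplit]
        simp only [hG1, hG2, hG3, hG4, hG5, hG6, hG7, hG8]
        have e1 : ∀ k : Fin n, (if k = i then (0:F) else 1) * β ^ q
            = (if k = i then (0:F) else β ^ q) := by
          intro k; split <;> simp
        simp_rw [e1, hone]
        have e2 : ∀ k : Fin n, (a * L i k) * ((β * a * ∑ l, L l k)) ^ q
            = (a * (β * a) ^ q) * (L i k * ((∑ l, L l k)) ^ q) := by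
          intro k; rw [mul_pow]; ring
        simp_rw [e2]
        rw [← Finset.mul_sum, key4]
        simp only [one_pow, mul_pow]
        linear_combination β ^ q * ha' - hβσ
      | succ j =>
        rw [hsplit]
        simp only [hG1, hG2, hG3, hG4, hG5, hG6, hG7, hG8]
        have e1 : ∀ k : Fin n, (if k = i then (0:F) else 1) * ((if k = j then (0:F) else 1)) ^ q
            = (if k = i then (0:F) else 1) * (if k = j then (0:F) else 1) := by
          intro k
          congr 1
          split <;> simp [zero_pow hq0]
        simp_rw [e1, hJJ]
        have e2 : ∀ k : Fin n, (a * L i k) * ((a * L j k)) ^ q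
            = (a * a ^ q) * (L i k * (L j k) ^ q) := by
          intro k; rw [mul_pow]; ring
        simp_rw [e2]
        rw [← Finset.mul_sum, hLe]
        by_cases hij : i = j
        · simp only [hij, if_true]
          linear_combination ha' + hγ'
        · simp only [hij, if_false]
          linear_combination hγ'
  -- linearity in the first argument
  have hx_lin : ∀ y, (∀ i, hermInner q (G i) y = 0) → ∀ x ∈ rowSpan G, hermInner q x y = 0 := by
    intro y hy x hx
    induction hx using Submodule.span_induction with
    | mem x hx => obtain ⟨i, rfl⟩ := hx; exact hy i
    | zero => simp [hermInner]
    | add x z hx hz ihx ihz =>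
      have h : hermInner q (x + z) y = hermInner q x y + hermInner q z y := by
        simp [hermInner, add_mul, Finset.sum_add_distrib]
      rw [h, ihx, ihz, add_zero]
    | smul c x hx ih =>
      have h : hermInner q (c • x) y = c * hermInner q x y := by
        simp only [hermInner, Pi.smul_apply, smul_eq_mul, Finset.mul_sum]
        exact Finset.sum_congr rfl fun i _ => by ring
      rw [h, ih, mul_zero]
  -- semilinearity in the second argument
  have hy_row : ∀ y ∈ rowSpan G, ∀ i, hermInner q (G i) y = 0 := by
    intro y hy i
    induction hy using Submodule.span_induction with
    | mem z hz => obtain ⟨j, rfl⟩ := hz; exact horth i j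
    | zero => simp [hermInner, zero_pow hq0]
    | add x z hx hz ihx ihz =>
      have h : hermInner q (G i) (x + z) = hermInner q (G i) x + hermInner q (G i) z := by
        simp [hermInner, hadd, mul_add, Finset.sum_add_distrib]
      rw [h, ihx, ihz, add_zero]
    | smul c x hx ih =>
      have h : hermInner q (G i) (c • x) = c ^ q * hermInner q (G i) x := by
        simp only [hermInner, Pi.smul_apply, smul_eq_mul, mul_pow, Finset.mul_sum]
        exact Finset.sum_congr rfl fun j _ => by ring
      rw [h, ih, mul_zero]
  have hrowmem : ∀ i, G i ∈ rowSpan G := fun i => Submodule.subset_span ⟨i, rfl⟩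
  -- the span is contained in its dual
  have hsub : (rowSpan G : Set ((Unit ⊕ Fin n) ⊕ (Unit ⊕ Fin n) → F)) ⊆
      hermDual q (rowSpan G) := by
    intro y hy x hx
    exact hx_lin y (hy_row y hy) x hx
  -- linear independence of the rows
  have hli : LinearIndependent F (fun i => G i) := by
    rw [Fintype.linearIndependent_iff]
    intro c hc
    have hcol : ∀ col, ∑ i, c i * G i col = 0 := by
      intro col
      have h := congrFun hc col
      simpa [Finset.sum_apply] using h
    have hd : ∀ i : Fin n, c i.succ = -(c 0 * β) := by
      have hd0 : ∀ j', ∑ i : Fin n, (c i.succ + c 0 * β) * L i j' = 0 := by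
        intro j'
        have h := hcol (Sum.inr (Sum.inr j'))
        rw [Fin.sum_univ_succ] at h
        simp only [hG4, hG8] at h
        have h2 : ∑ i : Fin n, c i.succ * (a * L i j') = a * ∑ i, c i.succ * L i j' := by
          rw [Finset.mul_sum]; exact Finset.sum_congr rfl fun _ _ => by ring
        rw [h2] at h
        have h3 : a * (∑ i : Fin n, (c i.succ + c 0 * β) * L i j') = 0 := by
          have h4 : ∑ i : Fin n, (c i.succ + c 0 * β) * L i j'
              = (∑ i, c i.succ * L i j') + c 0 * β * ∑ i, L i j' := by
            simp [add_mul, Finset.sum_add_distrib, Finset.mul_sum, mul_assoc]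
          rw [h4]
          have h5 : c 0 * (β * a * ∑ k, L k j') = c 0 * β * a * ∑ i, L i j' := by ring
          rw [h5] at h
          linear_combination h
        rcases mul_eq_zero.mp h3 with h | h
        · exact absurd h ha0
        · exact h
      have hvm : Matrix.vecMul (fun i => c i.succ + c 0 * β) L = 0 := by
        funext j'
        simpa [Matrix.vecMul, dotProduct] using hd0 j'
      have h1 : Matrix.vecMul (fun i => c i.succ + c 0 * β) (L * (L.map (· ^ q))ᵀ)
          = fun i => c i.succ + c 0 * β := by
        rw [hL, Matrix.vecMul_one]
      rw [← Matrix.vecMul_vecMul, hvm, Matrix.zero_vecMul] at h1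
      intro i
      have := congrFun h1 i
      simp only [Pi.zero_apply] at this
      linear_combination -this
    have hA : c 0 * θ - (n : F) * (c 0 * β) = 0 := by
      have h := hcol (Sum.inl (Sum.inl ()))
      rw [Fin.sum_univ_succ] at h
      simp only [hG1, hG5, mul_one] at h
      simp_rw [hd] at h
      rw [Finset.sum_const, Finset.card_univ] at h
      simp only [Fintype.card_fin, nsmul_eq_mul] at h
      linear_combination h
    have hc0 : c 0 = 0 := by
      by_cases hn0 : n = 0
      · subst hn0
        simp only [Nat.cast_zero, zero_mul, sub_zero] at hA
        exact (mul_eq_zero.mp hA).resolve_right hθ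
      · have j0 : Fin n := ⟨0, Nat.pos_of_ne_zero hn0⟩
        have h := hcol (Sum.inl (Sum.inr j0))
        rw [Fin.sum_univ_succ] at h
        simp only [hG2, hG6] at h
        have e : ∀ i : Fin n, c i.succ * (if j0 = i then (0:F) else 1)
            = (if i = j0 then (0:F) else -(c 0 * β)) := by
          intro i
          rw [hd i]
          by_cases hij : i = j0
          · simp [hij]
          · have h7 : j0 ≠ i := fun hh => hij hh.symm
            simp [hij, h7]
        simp_rw [e, hone] at h
        have hβ0 : c 0 * β = 0 := by
          have h6 : (c 0 * β) * (2 - (n : F)) = 0 := by linear_combination h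
          exact (mul_eq_zero.mp h6).resolve_right h2n
        rw [hβ0, mul_zero, sub_zero] at hA
        exact (mul_eq_zero.mp hA).resolve_right hθ
    intro i
    induction i using Fin.cases with
    | zero => exact hc0
    | succ i => rw [hd i, hc0, zero_mul, neg_zero]
  -- dimension of the row space
  have hfin : Module.finrank F (rowSpan G) = n + 1 := by
    rw [rowSpan, finrank_span_eq_card hli]
    simp
  refine ⟨?_, hfin⟩
  -- the kernel description of the dual
  set φ : ((Unit ⊕ Fin n) ⊕ (Unit ⊕ Fin n) → F) → ((Unit ⊕ Fin n) ⊕ (Unit ⊕ Fin n) → F) :=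
    fun y => fun j => (y j) ^ q with hφ
  have hφφ : ∀ y, φ (φ y) = y := by
    intro y; funext j; simp [hφ, hσσ]
  have hφinj : Function.Injective φ := by
    intro x y h
    have := congrArg φ h
    rwa [hφφ, hφφ] at this
  have hDchar : hermDual q (rowSpan G)
      = φ ⁻¹' ((LinearMap.ker G.mulVecLin : Submodule F _) : Set _) := by
    ext y
    constructor
    · intro hy
      simp only [Set.mem_preimage, SetLike.mem_coe, LinearMap.mem_ker]
      funext i
      have h := hy (G i) (hrowmem i)
      simpa [Matrix.mulVecLin_apply, Matrix.mulVec, dotProduct, hermInner, hφ] using h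
    · intro hy
      apply hx_lin
      intro i
      simp only [Set.mem_preimage, SetLike.mem_coe, LinearMap.mem_ker] at hy
      have h := congrFun hy i
      simpa [Matrix.mulVecLin_apply, Matrix.mulVec, dotProduct, hermInner, hφ] using h
  have hDimg : hermDual q (rowSpan G)
      = φ '' ((LinearMap.ker G.mulVecLin : Submodule F _) : Set _) := by
    rw [hDchar]
    ext z
    simp only [Set.mem_preimage, Set.mem_image]
    constructor
    · intro h; exact ⟨φ z, h, hφφ z⟩
    · rintro ⟨w, hw, rfl⟩; rwa [hφφ]
  -- cardinality of submodules
  have hcardsub : ∀ W : Submodule F ((Unit ⊕ Fin n) ⊕ (Unit ⊕ Fin n) → F),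
      Nat.card W = (q ^ 2) ^ Module.finrank F W := by
    intro W
    haveI : Fintype W := Fintype.ofFinite W
    rw [Nat.card_eq_fintype_card, Module.card_eq_pow_finrank (K := F), hF]
  -- finrank of the kernel
  have hkerfin : Module.finrank F (LinearMap.ker G.mulVecLin) = n + 1 := by
    have h1 := LinearMap.finrank_range_add_finrank_ker G.mulVecLin
    have h2 : Module.finrank F (LinearMap.range G.mulVecLin) = n + 1 := by
      have h3 : G.rank = n + 1 := by rw [hli.rank_matrix]; simp
      exact h3
    rw [h2, Module.finrank_pi] at h1
    simp only [Fintype.card_sum, Fintype.card_unit, Fintype.card_fin] at h1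
    omega
  -- conclude by cardinality
  have hcards : (hermDual q (rowSpan G : Set ((Unit ⊕ Fin n) ⊕ (Unit ⊕ Fin n) → F))).ncard
      ≤ (rowSpan G : Set ((Unit ⊕ Fin n) ⊕ (Unit ⊕ Fin n) → F)).ncard := by
    rw [hDimg, Set.ncard_image_of_injective _ hφinj]
    rw [← Nat.card_coe_set_eq, ← Nat.card_coe_set_eq]
    rw [SetLike.coe_sort_coe, SetLike.coe_sort_coe, hcardsub, hcardsub, hkerfin, hfin]
  have hfinD : (hermDual q (rowSpan G : Set ((Unit ⊕ Fin n) ⊕ (Unit ⊕ Fin n) → F))).Finite :=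
    Set.toFinite _
  exact Set.eq_of_subset_of_ncard_le hsub hcards hfinD
end

section
/- Let q = p^m be a power of a prime p, a ∈ F_{q²} with a^{q+1} = −1, and L an n×n unitary matrix over F_{q²}. Suppose δ = 0, γ ∈ F_{q²} satisfies γ^{q+1} = −2−n with −2−n ≠ 0 in F_{q²}, θ ∈ F_{q²} is nonzero, β = aθγ, α = −(n+1)β·γ^{−q}, and λ = 0. Then the code generated by the bordered matrix H (with first row (θ, β,…,β, α, λ(L₁+⋯+Lₙ)) and (i+1)-st row (δ, (Jₙ+Iₙ)ᵢ, γ, aLᵢ)) is a Hermitian self-dual code of length 2n+2 and dimension n+1. -/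
open Matrix BigOperators Finset

/-- Theorem 3, case 1) of the paper. With `δ = 0`,
`γ^{q+1} = -2 - n ≠ 0`, `θ ≠ 0`, `β = aθγ`, `α = -(n+1)β·γ^{-q}`, `λ = 0`,
the bordered matrix `H` (with `Jₙ + Iₙ`) generates a Hermitian self-dual code of
length `2n+2` and dimension `n+1`. -/
theorem stmt14 (p m q n : ℕ) (hp : p.Prime) (hm : 0 < m) (hq : q = p ^ m)
    (F : Type) [Field F] [Fintype F] (hF : Fintype.card F = q ^ 2)
    (a : F) (ha : a ^ (q + 1) = -1)
    (L : Matrix (Fin n) (Fin n) F) (hL : L * (L.map (· ^ q))ᵀ = 1)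
    (α β γ δ lam θ : F)
    (hδ : δ = 0)
    (hγ : γ ^ (q + 1) = -2 - (n : F)) (hγ0 : (-2 : F) - (n : F) ≠ 0)
    (hθ : θ ≠ 0)
    (hβ : β = a * θ * γ)
    (hα : α = -((n : F) + 1) * β * (γ ^ q)⁻¹)
    (hlam : lam = 0)
    (H : Matrix (Fin (n + 1)) ((Unit ⊕ Fin n) ⊕ (Unit ⊕ Fin n)) F)
    (hH1 : H 0 (Sum.inl (Sum.inl ())) = θ)
    (hH2 : ∀ j, H 0 (Sum.inl (Sum.inr j)) = β)
    (hH3 : H 0 (Sum.inr (Sum.inl ())) = α)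
    (hH4 : ∀ j, H 0 (Sum.inr (Sum.inr j)) = lam * ∑ k, L k j)
    (hH5 : ∀ i : Fin n, H i.succ (Sum.inl (Sum.inl ())) = δ)
    (hH6 : ∀ i j : Fin n, H i.succ (Sum.inl (Sum.inr j)) = if j = i then 2 else 1)
    (hH7 : ∀ i : Fin n, H i.succ (Sum.inr (Sum.inl ())) = γ)
    (hH8 : ∀ i j : Fin n, H i.succ (Sum.inr (Sum.inr j)) = a * L i j) :
    (rowSpan H : Set ((Unit ⊕ Fin n) ⊕ (Unit ⊕ Fin n) → F)) = hermDual q (rowSpan H) ∧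
    Module.finrank F (rowSpan H) = n + 1 := by
  classical
  -- basic facts about q and the Frobenius
  have hq0 : q ≠ 0 := by rw [hq]; exact pow_ne_zero _ hp.pos.ne'
  have hpF : (p : F) = 0 := by
    have h0 : ((Fintype.card F : ℕ) : F) = 0 := Nat.cast_card_eq_zero F
    rw [hF, hq, ← pow_mul] at h0
    push_cast at h0
    exact pow_eq_zero_iff (by positivity) |>.mp h0
  haveI : CharP F p := (CharP.charP_iff_prime_eq_zero hp).2 hpF
  haveI : Fact p.Prime := ⟨hp⟩
  have hadd : ∀ x y : F, (x + y) ^ q = x ^ q + y ^ q := by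
    intro x y
    have := map_add (iterateFrobenius F p m) x y
    simpa [iterateFrobenius_def, ← hq] using this
  have hnat : ∀ k : ℕ, ((k : F)) ^ q = (k : F) := by
    intro k
    have h := map_natCast (iterateFrobenius F p m) k
    rwa [iterateFrobenius_def, ← hq] at h
  have hneg : ∀ x : F, (-x) ^ q = -(x ^ q) := by
    intro x
    have h := map_neg (iterateFrobenius F p m) x
    simp only [iterateFrobenius_def, ← hq] at h
    exact h
  have hqq : ∀ x : F, (x ^ q) ^ q = x := by
    intro x
    rw [← pow_mul, ← sq, ← hF, FiniteField.pow_card]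
  -- nonvanishing facts
  have hγne : γ ≠ 0 := by
    intro h; rw [h, zero_pow (by omega)] at hγ; exact hγ0 hγ.symm
  have hγqne : γ ^ q ≠ 0 := pow_ne_zero _ hγne
  have haz : a ≠ 0 := by
    intro h; rw [h, zero_pow (by omega)] at ha
    exact absurd ha.symm (by norm_num)
  have ha' : a ^ q * a = -1 := by rw [← pow_succ]; exact ha
  have hγ' : γ ^ q * γ = -2 - (n : F) := by rw [← pow_succ]; exact hγ
  have hβq : β ^ q = a ^ q * θ ^ q * γ ^ q := by rw [hβ, mul_pow, mul_pow]
  have hnat1 : ((n : F) + 1) ^ q = (n : F) + 1 := by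
    have := hnat (n + 1); push_cast at this; exact this
  have h2q : (2 : F) ^ q = 2 := by
    have := hnat 2; push_cast at this; exact this
  have hαq : α ^ q = -((n : F) + 1) * β ^ q * γ⁻¹ := by
    rw [hα, mul_pow, mul_pow, hneg, hnat1, inv_pow, hqq]
  -- entries of L*L̄ᵀ
  have hLL : ∀ i j : Fin n, (∑ k, L i k * (L j k) ^ q) = if i = j then (1:F) else 0 := by
    intro i j
    have h := congrFun (congrFun hL i) j
    simpa [Matrix.mul_apply, Matrix.one_apply, Matrix.transpose_apply, Matrix.map_apply] using h
  -- sums of if-then-else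
  have hsum_if : ∀ j : Fin n, (∑ k : Fin n, (if k = j then (2:F) else 1)) = (n : F) + 1 := by
    intro j
    have he : ∀ k : Fin n, (if k = j then (2:F) else 1) = 1 + (if k = j then 1 else 0) := by
      intro k; split <;> norm_num
    simp [he, Finset.sum_add_distrib]
  have hsum_if2 : ∀ i j : Fin n,
      (∑ k : Fin n, (if k = i then (2:F) else 1) * (if k = j then 2 else 1))
        = (n : F) + 2 + (if i = j then 1 else 0) := by
    intro i j
    have he : ∀ k : Fin n, (if k = i then (2:F) else 1) * (if k = j then 2 else 1)
        = 1 + (if k = i then (1:F) else 0) + (if k = j then (1:F) else 0)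
          + (if k = i then (if i = j then (1:F) else 0) else 0) := by
      intro k
      split_ifs <;> simp_all <;> norm_num
    simp only [he, Finset.sum_add_distrib, Finset.sum_const, Finset.card_univ,
      Fintype.card_fin, nsmul_eq_mul, mul_one, Finset.sum_ite_eq', Finset.mem_univ, if_true]
    ring
  -- expansion of the hermitian inner product on the index type
  have hexp : ∀ x y : (Unit ⊕ Fin n) ⊕ (Unit ⊕ Fin n) → F, hermInner q x y =
      x (Sum.inl (Sum.inl ())) * y (Sum.inl (Sum.inl ())) ^ q
      + (∑ j : Fin n, x (Sum.inl (Sum.inr j)) * y (Sum.inl (Sum.inr j)) ^ q)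
      + x (Sum.inr (Sum.inl ())) * y (Sum.inr (Sum.inl ())) ^ q
      + ∑ j : Fin n, x (Sum.inr (Sum.inr j)) * y (Sum.inr (Sum.inr j)) ^ q := by
    intro x y
    simp [hermInner, Fintype.sum_sum_type]
    ring
  -- key algebraic identities
  have hββ : β * β ^ q = (2 + (n : F)) * (θ * θ ^ q) := by
    rw [hβq, hβ]
    linear_combination (θ * θ ^ q * γ ^ q * γ) * ha' - (θ * θ ^ q) * hγ'
  have hαα : α * α ^ q = -(((n : F) + 1) ^ 2) * (θ * θ ^ q) := by
    have h1 : α * α ^ q = ((n : F) + 1) ^ 2 * (β * β ^ q) * (γ ^ q * γ)⁻¹ := by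
      rw [hαq, hα]
      field_simp
    rw [h1, hββ, hγ']
    field_simp
    ring
  -- orthogonality of the rows
  have horth : ∀ i j : Fin (n + 1), hermInner q (H i) (H j) = 0 := by
    intro i j
    rw [hexp]
    induction i using Fin.cases with
    | zero =>
      induction j using Fin.cases with
      | zero =>
        simp only [hH1, hH2, hH3, hH4, hlam, zero_mul, zero_pow hq0, mul_zero,
          Finset.sum_const_zero, Finset.sum_const, Finset.card_univ, Fintype.card_fin,
          nsmul_eq_mul, add_zero]
        rw [hββ, hαα]; ring
      | succ j =>
        simp only [hH1, hH2, hH3, hH4, hH5, hH6, hH7, hH8, hδ, hlam, zero_mul,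
          zero_pow hq0, mul_zero, Finset.sum_const_zero, add_zero]
        have ht2 : ∑ k : Fin n, β * (if k = j then (2:F) else 1) ^ q = β * ((n:F)+1) := by
          simp only [apply_ite (· ^ q), h2q, one_pow, ← Finset.mul_sum, hsum_if]
        have ht3 : α * γ ^ q = -(((n:F)+1) * β) := by
          rw [hα]; field_simp
        rw [ht2, ht3]; ring
    | succ i =>
      induction j using Fin.cases with
      | zero =>
        simp only [hH1, hH2, hH3, hH4, hH5, hH6, hH7, hH8, hδ, hlam, zero_mul,
          zero_pow hq0, mul_zero, Finset.sum_const_zero, add_zero]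
        have ht2 : ∑ k : Fin n, (if k = i then (2:F) else 1) * β ^ q = ((n:F)+1) * β ^ q := by
          rw [← Finset.sum_mul, hsum_if]
        have ht3 : γ * α ^ q = -(((n:F)+1) * β ^ q) := by
          rw [hαq]; field_simp
        rw [ht2, ht3]; ring
      | succ j =>
        simp only [hH5, hH6, hH7, hH8, hδ, zero_mul, zero_pow hq0, mul_zero, zero_add]
        have ht2 : ∑ k : Fin n, (if k = i then (2:F) else 1) * ((if k = j then (2:F) else 1)) ^ q
            = (n : F) + 2 + (if i = j then 1 else 0) := by
          simp only [apply_ite (· ^ q), h2q, one_pow]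
          exact hsum_if2 i j
        have ht3 : γ * γ ^ q = -2 - (n : F) := by rw [mul_comm]; exact hγ'
        have ht4 : ∑ k : Fin n, (a * L i k) * (a * L j k) ^ q = -(if i = j then (1:F) else 0) := by
          have he : ∀ k : Fin n, (a * L i k) * (a * L j k) ^ q
              = (a ^ q * a) * (L i k * (L j k) ^ q) := by
            intro k; rw [mul_pow]; ring
          rw [Finset.sum_congr rfl (fun k _ => he k), ← Finset.mul_sum, hLL, ha']; ring
        rw [ht2, ht3, ht4]; ring
  -- (semi)linearity of hermInner
  have hI0l : ∀ y : (Unit ⊕ Fin n) ⊕ Unit ⊕ Fin n → F, hermInner q 0 y = 0 := by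
    intro y; simp [hermInner]
  have hIaddl : ∀ x x' y : (Unit ⊕ Fin n) ⊕ Unit ⊕ Fin n → F,
      hermInner q (x + x') y = hermInner q x y + hermInner q x' y := by
    intro x x' y; simp [hermInner, add_mul, Finset.sum_add_distrib]
  have hIsmull : ∀ (c : F) (x y : (Unit ⊕ Fin n) ⊕ Unit ⊕ Fin n → F),
      hermInner q (c • x) y = c * hermInner q x y := by
    intro c x y
    simp only [hermInner, Pi.smul_apply, smul_eq_mul, Finset.mul_sum]
    exact Finset.sum_congr rfl fun i _ => by ring
  have hI0r : ∀ x : (Unit ⊕ Fin n) ⊕ Unit ⊕ Fin n → F, hermInner q x 0 = 0 := by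
    intro x; simp [hermInner, zero_pow hq0]
  have hIaddr : ∀ x y y' : (Unit ⊕ Fin n) ⊕ Unit ⊕ Fin n → F,
      hermInner q x (y + y') = hermInner q x y + hermInner q x y' := by
    intro x y y'; simp [hermInner, hadd, mul_add, Finset.sum_add_distrib]
  have hIsmulr : ∀ (c : F) (x y : (Unit ⊕ Fin n) ⊕ Unit ⊕ Fin n → F),
      hermInner q x (c • y) = c ^ q * hermInner q x y := by
    intro c x y
    simp only [hermInner, Pi.smul_apply, smul_eq_mul, mul_pow, Finset.mul_sum]
    exact Finset.sum_congr rfl fun i _ => by ring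
  -- the Frobenius map on vectors
  set Φ : ((Unit ⊕ Fin n) ⊕ Unit ⊕ Fin n → F) → ((Unit ⊕ Fin n) ⊕ Unit ⊕ Fin n → F) :=
    fun y j => y j ^ q with hΦdef
  have hΦinj : Function.Injective Φ := by
    intro y z h
    funext j
    have hj : y j ^ q = z j ^ q := congrFun h j
    calc y j = (y j ^ q) ^ q := (hqq _).symm
    _ = (z j ^ q) ^ q := by rw [hj]
    _ = z j := hqq _
  have hmv : ∀ (y : (Unit ⊕ Fin n) ⊕ Unit ⊕ Fin n → F) (i : Fin (n + 1)),
      H.mulVecLin (Φ y) i = hermInner q (H i) y := by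
    intro y i
    simp [Matrix.mulVecLin_apply, Matrix.mulVec, dotProduct, hermInner, hΦdef]
  have hker : ∀ y : (Unit ⊕ Fin n) ⊕ Unit ⊕ Fin n → F,
      (∀ i, hermInner q (H i) y = 0) ↔ Φ y ∈ LinearMap.ker H.mulVecLin := by
    intro y
    rw [LinearMap.mem_ker]
    constructor
    · intro h
      funext i
      simpa [hmv y i] using h i
    · intro h i
      rw [← hmv y i, h]
      rfl
  -- the hermitian dual as a preimage of a kernel
  have hdual : hermDual q ((rowSpan H : Set ((Unit ⊕ Fin n) ⊕ Unit ⊕ Fin n → F)))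
      = Φ ⁻¹' ((LinearMap.ker H.mulVecLin : Submodule F _) : Set _) := by
    ext y
    constructor
    · intro hy
      exact Set.mem_preimage.mpr ((hker y).mp fun i =>
        hy (H i) (Submodule.subset_span ⟨i, rfl⟩))
    · intro hy x hx
      have h1 : ∀ i, hermInner q (H i) y = 0 := (hker y).mpr hy
      have hx' : x ∈ Submodule.span F (Set.range fun i => H i) := hx
      clear hx
      induction hx' using Submodule.span_induction with
      | mem z hz => obtain ⟨i, rfl⟩ := hz; exact h1 i
      | zero => exact hI0l y
      | add u v hu hv pu pv => rw [hIaddl, pu, pv, add_zero]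
      | smul c u hu pu => rw [hIsmull, pu, mul_zero]
  -- the code is self-orthogonal
  have hsub : (rowSpan H : Set ((Unit ⊕ Fin n) ⊕ Unit ⊕ Fin n → F))
      ⊆ hermDual q (rowSpan H : Set _) := by
    rw [hdual]
    intro y hy
    have hy' : y ∈ Submodule.span F (Set.range fun i => H i) := hy
    clear hy
    have key : ∀ i, hermInner q (H i) y = 0 := by
      induction hy' using Submodule.span_induction with
      | mem z hz => obtain ⟨j, rfl⟩ := hz; exact fun i => horth i j
      | zero => exact fun i => hI0r (H i)
      | add u v hu hv pu pv => exact fun i => by rw [hIaddr, pu i, pv i, add_zero]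
      | smul c u hu pu => exact fun i => by rw [hIsmulr, pu i, mul_zero]
    exact Set.mem_preimage.mpr ((hker y).mp key)
  -- linear independence of the rows
  have hlin : LinearIndependent F (fun i : Fin (n + 1) => H i) := by
    rw [Fintype.linearIndependent_iff]
    intro g hg
    have hco : ∀ x, ∑ i : Fin (n + 1), g i * H i x = 0 := by
      intro x
      have h := congrFun hg x
      simpa [Finset.sum_apply, Pi.smul_apply, smul_eq_mul] using h
    have h0 : g 0 = 0 := by
      have h := hco (Sum.inl (Sum.inl ()))
      rw [Fin.sum_univ_succ] at h
      simp only [hH1, hH5, hδ, mul_zero, Finset.sum_const_zero, add_zero] at h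
      exact (mul_eq_zero.mp h).resolve_right hθ
    have hc : ∀ j, ∑ i : Fin n, g i.succ * L i j = 0 := by
      intro j
      have h := hco (Sum.inr (Sum.inr j))
      rw [Fin.sum_univ_succ] at h
      simp only [hH4, hH8, hlam, zero_mul, mul_zero, zero_add] at h
      have h2 : a * ∑ i : Fin n, g i.succ * L i j = 0 := by
        rw [Finset.mul_sum, ← h]
        exact Finset.sum_congr rfl fun i _ => by ring
      exact (mul_eq_zero.mp h2).resolve_left haz
    have hcv : (fun i : Fin n => g i.succ) ᵥ* L = 0 := by
      funext j
      simpa [Matrix.vecMul, dotProduct] using hc j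
    have hz : (fun i : Fin n => g i.succ) = 0 := by
      calc (fun i : Fin n => g i.succ)
          = (fun i : Fin n => g i.succ) ᵥ* (1 : Matrix (Fin n) (Fin n) F) :=
            (Matrix.vecMul_one _).symm
      _ = (fun i : Fin n => g i.succ) ᵥ* (L * (L.map (· ^ q))ᵀ) := by rw [hL]
      _ = ((fun i : Fin n => g i.succ) ᵥ* L) ᵥ* (L.map (· ^ q))ᵀ :=
            (Matrix.vecMul_vecMul _ _ _).symm
      _ = 0 := by rw [hcv, Matrix.zero_vecMul]
    intro i
    induction i using Fin.cases with
    | zero => exact h0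
    | succ i => exact congrFun hz i
  -- the rank statement
  have hrank : Module.finrank F (rowSpan H) = n + 1 := by
    have h := linearIndependent_iff_card_eq_finrank_span.mp hlin
    rw [Fintype.card_fin] at h
    exact h.symm
  -- dimension of the kernel
  have hcardι : Fintype.card ((Unit ⊕ Fin n) ⊕ Unit ⊕ Fin n) = 2 * n + 2 := by
    simp [Fintype.card_sum]
    omega
  have hrange : Module.finrank F (LinearMap.range H.mulVecLin) = n + 1 := by
    have h := hlin.rank_matrix
    rw [Fintype.card_fin] at h
    exact h
  have hkerrank : Module.finrank F (LinearMap.ker H.mulVecLin) = n + 1 := by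
    have h := LinearMap.finrank_range_add_finrank_ker H.mulVecLin
    rw [hrange, Module.finrank_pi, hcardι] at h
    omega
  -- cardinalities
  haveI : Fintype ↥(rowSpan H) := Fintype.ofFinite _
  haveI : Fintype ↥(LinearMap.ker H.mulVecLin) := Fintype.ofFinite _
  have hCcard : Nat.card ↥(rowSpan H) = Fintype.card F ^ (n + 1) := by
    rw [Nat.card_eq_fintype_card, Module.card_eq_pow_finrank (K := F), hrank]
  have hKcard : Nat.card ↥(LinearMap.ker H.mulVecLin) = Fintype.card F ^ (n + 1) := by
    rw [Nat.card_eq_fintype_card, Module.card_eq_pow_finrank (K := F), hkerrank]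
  have hΦbij : Function.Bijective Φ := (Finite.injective_iff_bijective).mp hΦinj
  have hncard : (hermDual q (rowSpan H : Set ((Unit ⊕ Fin n) ⊕ Unit ⊕ Fin n → F))).ncard
      = ((rowSpan H : Set ((Unit ⊕ Fin n) ⊕ Unit ⊕ Fin n → F))).ncard := by
    rw [hdual]
    set e := Equiv.ofBijective Φ hΦbij with he
    have hpre : Φ ⁻¹' ((LinearMap.ker H.mulVecLin : Submodule F _) : Set _)
        = e.symm '' ((LinearMap.ker H.mulVecLin : Submodule F ((Unit ⊕ Fin n) ⊕ Unit ⊕ Fin n → F)) : Set ((Unit ⊕ Fin n) ⊕ Unit ⊕ Fin n → F)) := by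
      rw [Equiv.image_eq_preimage_symm, Equiv.symm_symm]
      rfl
    rw [hpre, Set.ncard_image_of_injective _ e.symm.injective]
    have h1 : ((LinearMap.ker H.mulVecLin : Submodule F ((Unit ⊕ Fin n) ⊕ Unit ⊕ Fin n → F)) : Set ((Unit ⊕ Fin n) ⊕ Unit ⊕ Fin n → F)).ncard
        = Nat.card ↥(LinearMap.ker H.mulVecLin) := by
      rw [← Nat.card_coe_set_eq]
      rfl
    have h2 : ((rowSpan H : Submodule F ((Unit ⊕ Fin n) ⊕ Unit ⊕ Fin n → F)) : Set ((Unit ⊕ Fin n) ⊕ Unit ⊕ Fin n → F)).ncard = Nat.card ↥(rowSpan H) := by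
      rw [← Nat.card_coe_set_eq]
      rfl
    rw [h1, h2, hCcard, hKcard]
  exact ⟨Set.eq_of_subset_of_ncard_le hsub (le_of_eq hncard) (Set.toFinite _), hrank⟩
end
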